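/- arXiv:1704.08799 — 8 statements merged into one kernel-verified Lean document; each statement's English description precedes it below -/
import Mathlib

section
/- Let A be an m-th order n-dimensional tensor. If A is spectral ℓ-symmetric (i.e. Spec(A) = e^{i2π/ℓ}·Spec(A) as multisets) and c(A) is the cyclic index of A (the maximum k such that Spec(A) = e^{i2π/k}·Spec(A)), then ℓ divides c(A). -/
open BigOperators

/-- An order-`m`, dimension-`n` real tensor (hypermatrix). -/
abbrev Tensor (m n : ℕ) : Type := (Fin m → Fin n) → ℝ

/-- The primitive rotation `e^{i·2π/k}` of the complex plane. -/
noncomputable def rot (k : ℕ) : ℂ := Complex.exp (2 * (Real.pi : ℂ) * Complex.I / (k : ℂ))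

/-- A tensor is nonnegative if all its entries are nonnegative. -/
def Tensor.Nonneg {m n : ℕ} (A : Tensor m n) : Prop := ∀ α, 0 ≤ A α

/-- A tensor is symmetric if its entries are invariant under permutations of indices. -/
def Tensor.Symm {m n : ℕ} (A : Tensor m n) : Prop :=
  ∀ (σ : Equiv.Perm (Fin m)) (α : Fin m → Fin n), A (α ∘ σ) = A α

/-- Arc `(i,j)` of the digraph associated to `A`: some entry `a_{i i₂ … i_m} ≠ 0`
with `j` among the later indices. -/
def Tensor.Arc {m n : ℕ} [NeZero m] (A : Tensor m n) (i j : Fin n) : Prop :=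
  ∃ α : Fin m → Fin n, A α ≠ 0 ∧ α 0 = i ∧ ∃ k : Fin m, k ≠ 0 ∧ α k = j

/-- `A` is weakly irreducible if its associated digraph is strongly connected. -/
def Tensor.WeaklyIrreducible {m n : ℕ} [NeZero m] (A : Tensor m n) : Prop :=
  ∀ i j : Fin n, Relation.ReflTransGen A.Arc i j

/-- The eigenvalue equations `(A x^{m-1})_i = λ x_i^{m-1}` for all `i`. -/
def Tensor.EigEq {m n : ℕ} [NeZero m] (A : Tensor m n) (lam : ℂ) (x : Fin n → ℂ) : Prop :=
  ∀ i : Fin n,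
    (∑ α : Fin m → Fin n,
      if α 0 = i then (A α : ℂ) * ∏ k ∈ Finset.univ.erase (0 : Fin m), x (α k) else 0)
    = lam * x i ^ (m - 1)

/-- `lam` is an eigenvalue of the tensor `A`. -/
def Tensor.IsEig {m n : ℕ} [NeZero m] (A : Tensor m n) (lam : ℂ) : Prop :=
  ∃ x : Fin n → ℂ, x ≠ 0 ∧ A.EigEq lam x

/-- `A` is spectral `ℓ`-symmetric: its spectrum is invariant under rotation by `e^{i2π/ℓ}`. -/
def Tensor.SpectralSym {m n : ℕ} [NeZero m] (ℓ : ℕ) (A : Tensor m n) : Prop :=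
  ∀ lam : ℂ, A.IsEig lam ↔ A.IsEig (rot ℓ * lam)

/-- `A = e^{-iθ} D^{-(m-1)} A D` for the diagonal matrix `D = diag d`, entrywise. -/
def Tensor.DiagSim {m n : ℕ} [NeZero m] (A : Tensor m n) (θ : ℝ) (d : Fin n → ℂ) : Prop :=
  ∀ α : Fin m → Fin n,
    (A α : ℂ) = Complex.exp (-(θ : ℂ) * Complex.I) * d (α 0) ^ (-((m : ℤ) - 1)) * (A α : ℂ) *
      ∏ k ∈ Finset.univ.erase (0 : Fin m), d (α k)

/-- The set `𝔇^{(j)}` of normalized unimodular diagonal matrices `D` with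
`A = e^{-i2πj/ℓ} D^{-(m-1)} A D`. -/
def Tensor.DSet {m n : ℕ} [NeZero m] [NeZero n] (A : Tensor m n) (ℓ j : ℕ) :
    Set (Fin n → ℂ) :=
  {d | d 0 = 1 ∧ (∀ i, ‖d i‖ = 1) ∧ A.DiagSim (2 * Real.pi * j / ℓ) d}

/-- The set `𝔇 = ⋃_{j=0}^{ℓ-1} 𝔇^{(j)}`. -/
def Tensor.DFull {m n : ℕ} [NeZero m] [NeZero n] (A : Tensor m n) (ℓ : ℕ) :
    Set (Fin n → ℂ) :=
  ⋃ j ∈ Finset.range ℓ, A.DSet ℓ j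

/-- An `m`-uniform hypergraph on vertex set `Fin n`. -/
structure UHypergraph (m n : ℕ) where
  edges : Finset (Finset (Fin n))
  uniform : ∀ e ∈ edges, e.card = m

/-- The adjacency tensor of an `m`-uniform hypergraph. -/
noncomputable def UHypergraph.adjTensor {m n : ℕ} (G : UHypergraph m n) : Tensor m n :=
  fun α => if Finset.image α Finset.univ ∈ G.edges then (1 : ℝ) / (m - 1).factorial else 0

/-- A hypergraph is connected if every two vertices are joined by a walk. -/
def UHypergraph.Connected {m n : ℕ} (G : UHypergraph m n) : Prop :=
  ∀ i j : Fin n, Relation.ReflTransGen (fun u v => ∃ e ∈ G.edges, u ∈ e ∧ v ∈ e) i j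

/-!
The rotations `u : ℂˣ` with `u • Spec = Spec` form a subgroup of `ℂˣ`. If it contains the
primitive roots `e^{2πi/ℓ}` and `e^{2πi/c}`, Bézout's identity `gcd(ℓ, c) = ℓa + cb` gives
`e^{2πi/lcm(ℓ, c)} = e^{2πib/ℓ} e^{2πia/c}`, so it also contains `e^{2πi/lcm(ℓ, c)}`.
Maximality of `c` then forces `lcm(ℓ, c) = c`.
-/

namespace Multiset

variable (G : Type*) {α : Type*} [Group G] [MulAction G α]

def stabilizer (s : Multiset α) : Subgroup G where
  carrier := {g | s.map (g • ·) = s}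
  one_mem' := by simp
  mul_mem' {g h} (hg : s.map (g • ·) = s) (hh : s.map (h • ·) = s) :=
    calc s.map ((g * h) • ·) = (s.map (h • ·)).map (g • ·) := by
          simp only [map_map, Function.comp_def, mul_smul]
      _ = s := by rw [hh, hg]
  inv_mem' {g} (hg : s.map (g • ·) = s) :=
    calc s.map (g⁻¹ • ·) = (s.map (g • ·)).map (g⁻¹ • ·) := by rw [hg]
      _ = s := by simp [map_map]

variable {G}

theorem mem_stabilizer {s : Multiset α} {g : G} : g ∈ s.stabilizer G ↔ s.map (g • ·) = s :=
  Iff.rfl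

end Multiset

theorem rot_ne_zero (k : ℕ) : rot k ≠ 0 := Complex.exp_ne_zero _

theorem rot_lcm {ℓ c : ℕ} (hℓ : 0 < ℓ) (hc : 0 < c) :
    rot (ℓ.lcm c) = rot ℓ ^ ℓ.gcdB c * rot c ^ ℓ.gcdA c := by
  have hbezout : (ℓ.gcd c : ℂ) = ℓ * ℓ.gcdA c + c * ℓ.gcdB c := by
    exact_mod_cast Nat.gcd_eq_gcd_ab ℓ c
  have hgcd_lcm : (ℓ.gcd c : ℂ) * ℓ.lcm c = ℓ * c := by exact_mod_cast Nat.gcd_mul_lcm ℓ c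
  have hℓ0 : (ℓ : ℂ) ≠ 0 := by exact_mod_cast hℓ.ne'
  have hc0 : (c : ℂ) ≠ 0 := by exact_mod_cast hc.ne'
  have hL0 : (ℓ.lcm c : ℂ) ≠ 0 := by exact_mod_cast (Nat.lcm_pos hℓ hc).ne'
  rw [rot, rot, rot, ← Complex.exp_int_mul, ← Complex.exp_int_mul, ← Complex.exp_add]
  congr 1
  field_simp
  linear_combination (ℓ.lcm c : ℂ) * hbezout - hgcd_lcm

theorem Multiset.map_rot_lcm_mul_eq_self {s : Multiset ℂ} {ℓ c : ℕ} (hℓ : 0 < ℓ) (hc : 0 < c)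
    (hsℓ : s.map (rot ℓ * ·) = s) (hsc : s.map (rot c * ·) = s) :
    s.map (rot (ℓ.lcm c) * ·) = s := by
  let u (k : ℕ) : ℂˣ := Units.mk0 (rot k) (rot_ne_zero k)
  have hu : u (ℓ.lcm c) = u ℓ ^ ℓ.gcdB c * u c ^ ℓ.gcdA c := by
    ext
    simp [u, rot_lcm hℓ hc]
  have hmem : u (ℓ.lcm c) ∈ s.stabilizer ℂˣ := by
    rw [hu]
    exact mul_mem (zpow_mem (mem_stabilizer.2 hsℓ) _) (zpow_mem (mem_stabilizer.2 hsc) _)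
  exact mem_stabilizer.1 hmem

theorem Nat.dvd_of_lcm_le {ℓ c : ℕ} (hℓ : 0 < ℓ) (hc : 0 < c) (h : ℓ.lcm c ≤ c) : ℓ ∣ c := by
  have hlcm : ℓ.lcm c = c :=
    le_antisymm h (Nat.le_of_dvd (Nat.lcm_pos hℓ hc) (Nat.dvd_lcm_right ℓ c))
  exact hlcm ▸ Nat.dvd_lcm_left ℓ c

theorem stmt0_general {ℓ c : ℕ} (spec : Multiset ℂ)
    (hℓ : 0 < ℓ)
    (hsym : spec.map (fun z => rot ℓ * z) = spec)
    (hc : IsGreatest {k : ℕ | 0 < k ∧ spec.map (fun z => rot k * z) = spec} c) :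
    ℓ ∣ c := by
  obtain ⟨⟨hcpos, hcspec⟩, hmax⟩ := hc
  have hlcm := Multiset.map_rot_lcm_mul_eq_self hℓ hcpos hsym hcspec
  exact Nat.dvd_of_lcm_le hℓ hcpos (hmax ⟨Nat.lcm_pos hℓ hcpos, hlcm⟩)

/-- If a tensor `A` (with spectrum `spec`, the multiset of roots of its
characteristic polynomial, of cardinality `n(m-1)^{n-1}`) is spectral `ℓ`-symmetric and
`c` is its cyclic index (the greatest `k` with `Spec(A) = e^{i2π/k}·Spec(A)`), then `ℓ ∣ c`. -/
theorem stmt0 {m n ℓ c : ℕ} (A : Tensor m n) (spec : Multiset ℂ)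
    (hcard : Multiset.card spec = n * (m - 1) ^ (n - 1))
    (hℓ : 0 < ℓ)
    (hsym : spec.map (fun z => rot ℓ * z) = spec)
    (hc : IsGreatest {k : ℕ | 0 < k ∧ spec.map (fun z => rot k * z) = spec} c) :
    ℓ ∣ c :=
  stmt0_general spec hℓ hsym hc
end

section
/- Let G be a finite abelian group of order rℓ with a subgroup H of order r, and let p be a prime dividing ℓ. Then there exists an element D ∈ G \ H such that D^{r_{[p]}·p} = identity, where r_{[p]} is the largest power of p dividing r. -/
/-!
Cauchy's theorem in `G ⧸ H` gives `g ∉ H` with `g ^ p ∈ H`. The order of `g ^ p` divides `r`;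
let `m` be its prime-to-`p` part. Since `{n : ℤ | g ^ n ∈ H}` is an ideal of `ℤ` containing `p`
but not `1`, the element `D = g ^ m` still lies outside `H`, and
`D ^ (r_{[p]} p) = (g ^ p) ^ (m r_{[p]}) = 1`.
-/

open Nat

theorem Subgroup.pow_notMem_of_coprime {G : Type*} [Group G] {H : Subgroup G} {g : G} {p k : ℕ}
    (hg : g ∉ H) (hgp : g ^ p ∈ H) (hk : k.Coprime p) : g ^ k ∉ H := by
  intro hgk
  refine hg ?_
  have bezout : (1 : ℤ) = k * k.gcdA p + p * k.gcdB p := by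
    rw [← Nat.gcd_eq_gcd_ab, hk, Nat.cast_one]
  rw [← zpow_one g, bezout, zpow_add, zpow_mul, zpow_mul]
  exact H.mul_mem (H.zpow_mem (by exact_mod_cast hgk) _) (H.zpow_mem (by exact_mod_cast hgp) _)

theorem Subgroup.exists_notMem_pow_mem_of_prime_dvd_index {G : Type*} [Group G]
    (H : Subgroup G) [H.Normal] [H.FiniteIndex] {p : ℕ} [Fact p.Prime] (hp : p ∣ H.index) :
    ∃ g : G, g ∉ H ∧ g ^ p ∈ H := by
  obtain ⟨x, hx⟩ := exists_prime_orderOf_dvd_card' (G := G ⧸ H) p hp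
  obtain ⟨g, rfl⟩ := QuotientGroup.mk_surjective x
  refine ⟨g, fun hg => ?_, ?_⟩
  · rw [← QuotientGroup.eq_one_iff] at hg
    rw [hg, orderOf_one] at hx
    exact (Fact.out : p.Prime).one_lt.ne hx
  · rw [← QuotientGroup.eq_one_iff, QuotientGroup.mk_pow, ← hx, pow_orderOf_eq_one]

theorem pow_ordCompl_mul_ordProj_eq_one {G : Type*} [Monoid G] {x : G} {n : ℕ} (hn : n ≠ 0)
    (hx : orderOf x ∣ n) (p : ℕ) :
    x ^ (ordCompl[p] (orderOf x) * ordProj[p] n) = 1 := by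
  refine orderOf_dvd_iff_pow_eq_one.mp ?_
  conv_lhs => rw [← Nat.ordProj_mul_ordCompl_eq_self (orderOf x) p, mul_comm]
  exact mul_dvd_mul_left _ (Nat.ordProj_dvd_ordProj_of_dvd hn hx p)

/-- a finite abelian group `G` of order `rℓ` with a subgroup `H` of order `r`,
and a prime `p ∣ ℓ`, contains an element `D ∉ H` with `D^{r_{[p]}·p} = 1`, where
`r_{[p]} = p^{v_p(r)}` is the largest power of `p` dividing `r`. -/
theorem stmt5 {G : Type*} [CommGroup G] [Fintype G] (H : Subgroup G) (r ℓ p : ℕ)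
    (hp : p.Prime) (hpl : p ∣ ℓ) (hG : Fintype.card G = r * ℓ) (hH : Nat.card H = r) :
    ∃ D : G, D ∉ H ∧ D ^ (p ^ (r.factorization p) * p) = 1 := by
  have : Fact p.Prime := ⟨hp⟩
  have hr : r ≠ 0 := hH ▸ Nat.card_pos.ne'
  have hindex : H.index = ℓ := by
    have := H.card_mul_index
    rw [hH, Nat.card_eq_fintype_card, hG] at this
    exact Nat.eq_of_mul_eq_mul_left (Nat.pos_of_ne_zero hr) this
  obtain ⟨g, hg, hgp⟩ := H.exists_notMem_pow_mem_of_prime_dvd_index (hindex ▸ hpl)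
  have hm : orderOf (g ^ p) ∣ r := hH ▸ H.orderOf_dvd_natCard hgp
  set m := ordCompl[p] (orderOf (g ^ p))
  have hcop : m.Coprime p := (Nat.coprime_ordCompl hp (orderOf_pos _).ne').symm
  refine ⟨g ^ m, H.pow_notMem_of_coprime hg hgp hcop, ?_⟩
  calc (g ^ m) ^ (p ^ r.factorization p * p)
      = (g ^ p) ^ (m * p ^ r.factorization p) := by rw [← pow_mul, ← pow_mul]; ring_nf
    _ = 1 := pow_ordCompl_mul_ordProj_eq_one hr hm p
end

section
/- Let A be an m-th order n-dimensional weakly irreducible nonnegative tensor that is spectral ℓ-symmetric, and suppose D ∈ 𝔇^{(j)} satisfies D ≠ I and D^σ = I. Then there exists a map φ : [n] → {1,...,σ} taking at least two distinct values, with φ(1) ≡ 0 mod σ, such that whenever a_{i1...im} ≠ 0 one has j/ℓ + m·φ(i1)/σ ≡ (φ(i1)+···+φ(im))/σ (mod ℤ). -/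
open BigOperators

/-- An `m`-uniform hypergraph on vertex set `Fin n`. -/
structure TensorHypergraph (m n : ℕ) where
  edges : Finset (Finset (Fin n))
  uniform : ∀ e ∈ edges, e.card = m

/-- The adjacency tensor of an `m`-uniform hypergraph. -/
noncomputable def TensorHypergraph.adjTensor {m n : ℕ} (G : TensorHypergraph m n) : Tensor m n :=
  fun α => if Finset.image α Finset.univ ∈ G.edges then (1 : ℝ) / (m - 1).factorial else 0

/-- A hypergraph is connected if every two vertices are joined by a walk. -/
def TensorHypergraph.Connected {m n : ℕ} (G : TensorHypergraph m n) : Prop :=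
  ∀ i j : Fin n, Relation.ReflTransGen (fun u v => ∃ e ∈ G.edges, u ∈ e ∧ v ∈ e) i j

/- Every entry `d i` is a `σ`-th root of unity, hence `d i = ζ ^ φ i` for `ζ = e^{2πi/σ}` and a
`φ i ∈ {1, …, σ}`; the normalization `d 0 = 1` forces `φ 0 = σ` and `d ≠ 1` forces a second
value. For a nonzero entry `a_α`, the identity `A = e^{-iθ} D^{-(m-1)} A D` at `α` says that
`e^{-iθ} ζ^{∑ₖ φ(αₖ) - m φ(α₀)} = 1`, i.e. `∑ₖ φ(αₖ)/σ - m φ(α₀)/σ - j/ℓ` is an integer. -/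

open Complex Real

lemma IsPrimitiveRoot.exists_pow_eq_of_pow_eq_one {R : Type*} [CommRing R] [IsDomain R]
    {ζ z : R} {σ : ℕ} (hζ : IsPrimitiveRoot ζ σ) (hσ : 0 < σ) (hz : z ^ σ = 1) : ∃ k, 1 ≤ k ∧ k ≤ σ ∧ ζ ^ k = z := by
  have : NeZero σ := ⟨hσ.ne'⟩
  obtain ⟨i, hiσ, rfl⟩ := hζ.eq_pow_of_pow_eq_one hz
  rcases Nat.eq_zero_or_pos i with rfl | hi
  · exact ⟨σ, hσ, le_rfl, by rw [hζ.pow_eq_one, pow_zero]⟩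
  · exact ⟨i, hi, hiσ.le, rfl⟩

lemma IsPrimitiveRoot.eq_of_pow_eq_one_of_le {M : Type*} [CommMonoid M] {ζ : M} {σ k : ℕ}
    (hζ : IsPrimitiveRoot ζ σ) (hk : 1 ≤ k) (hkσ : k ≤ σ) (h : ζ ^ k = 1) : k = σ :=
  le_antisymm hkσ (Nat.le_of_dvd hk (hζ.dvd_of_pow_eq_one k h))

lemma exists_int_eq_of_exp_two_pi_I_mul_eq_one {q : ℚ} (h : exp (2 * π * I * q) = 1) :
    ∃ z : ℤ, q = z := by
  obtain ⟨z, hz⟩ := exp_eq_one_iff.mp h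
  refine ⟨z, ?_⟩
  have : (q : ℂ) = z := mul_left_cancel₀ two_pi_I_ne_zero (by rw [hz]; ring)
  exact_mod_cast this

lemma Tensor.DiagSim.exp_mul_zpow_mul_prod_eq_one {m n : ℕ} [NeZero m] {A : Tensor m n} {θ : ℝ}
    {d : Fin n → ℂ} (hA : A.DiagSim θ d) {α : Fin m → Fin n} (hα : A α ≠ 0) :
    exp (-(θ : ℂ) * I) * d (α 0) ^ (-((m : ℤ) - 1)) *
      ∏ k ∈ Finset.univ.erase (0 : Fin m), d (α k) = 1 := by
  have hαC : (A α : ℂ) ≠ 0 := by exact_mod_cast hα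
  refine mul_left_cancel₀ hαC ?_
  linear_combination -(hA α)

lemma Tensor.DiagSim.exists_int_phase_eq {m n ℓ σ j : ℕ} [NeZero m] {A : Tensor m n}
    {φ : Fin n → ℕ} (hA : A.DiagSim (2 * π * j / ℓ) fun i => exp (2 * π * I / σ) ^ φ i)
    {α : Fin m → Fin n} (hα : A α ≠ 0) :
    ∃ z : ℤ, (j : ℚ) / ℓ + (m * φ (α 0) : ℚ) / σ = (∑ k : Fin m, (φ (α k) : ℚ)) / σ + z := by
  set ζ := exp (2 * π * I / σ)
  set e : ℤ := ∑ k ∈ Finset.univ.erase (0 : Fin m), (φ (α k) : ℤ) - ((m : ℤ) - 1) * φ (α 0)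
  have hζ : ζ ≠ 0 := exp_ne_zero _
  have hprod : (ζ ^ φ (α 0)) ^ (-((m : ℤ) - 1)) *
      ∏ k ∈ Finset.univ.erase (0 : Fin m), ζ ^ φ (α k) = ζ ^ e := by
    rw [Finset.prod_pow_eq_pow_sum, ← zpow_natCast, ← zpow_natCast, ← zpow_mul, ← zpow_add₀ hζ]
    congr 1
    push_cast
    ring
  have hone := hA.exp_mul_zpow_mul_prod_eq_one hα
  rw [mul_assoc, hprod, ← exp_int_mul, ← Complex.exp_add] at hone
  obtain ⟨t, ht⟩ := exists_int_eq_of_exp_two_pi_I_mul_eq_one (q := e / σ - j / ℓ) <| by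
    rw [← hone]; push_cast; ring_nf
  refine ⟨-t, ?_⟩
  rw [← Finset.add_sum_erase _ _ (Finset.mem_univ (0 : Fin m))]
  have hte : ((e : ℚ) / σ - j / ℓ) = t := ht
  simp only [e] at hte
  push_cast at hte ⊢
  linear_combination -hte

theorem stmt6_general {m n ℓ σ j : ℕ} [NeZero m] [NeZero n] (hσ : 0 < σ)
    (A : Tensor m n)
    (d : Fin n → ℂ) (hd : d ∈ A.DSet ℓ j) (hdne : d ≠ fun _ => 1)
    (hdσ : ∀ i, d i ^ σ = 1) :
    ∃ φ : Fin n → ℕ, (∀ v, 1 ≤ φ v ∧ φ v ≤ σ) ∧ φ 0 = σ ∧ (∃ v w, φ v ≠ φ w) ∧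
      ∀ α : Fin m → Fin n, A α ≠ 0 →
        ∃ z : ℤ, (j : ℚ) / (ℓ : ℚ) + ((m : ℚ) * (φ (α 0) : ℚ)) / (σ : ℚ)
          = (∑ k : Fin m, (φ (α k) : ℚ)) / (σ : ℚ) + (z : ℚ) := by
  obtain ⟨hd0, -, hsim⟩ := hd
  have hζ := isPrimitiveRoot_exp σ hσ.ne'
  choose φ hφ1 hφσ hφ using fun v => hζ.exists_pow_eq_of_pow_eq_one hσ (hdσ v)
  have hdφ : d = fun i => exp (2 * π * I / σ) ^ φ i := funext fun i => (hφ i).symm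
  have hφ0 : φ 0 = σ := hζ.eq_of_pow_eq_one_of_le (hφ1 0) (hφσ 0) (by rw [hφ, hd0])
  refine ⟨φ, fun v => ⟨hφ1 v, hφσ v⟩, hφ0, ?_, fun α hα => ?_⟩
  · obtain ⟨v, hv⟩ : ∃ v, d v ≠ 1 := by
      by_contra! h
      exact hdne (funext h)
    exact ⟨v, 0, fun hv0 => hv (by rw [← hd0, ← hφ, ← hφ, hv0])⟩
  · rw [hdφ] at hsim
    exact hsim.exists_int_phase_eq hα

/-- if `D ∈ 𝔇^{(j)}`, `D ≠ I` and `D^σ = I`, then there is a map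
`φ : [n] → {1,…,σ}` taking at least two values, with `φ(1) ≡ 0 (mod σ)` (i.e. `φ(1) = σ`),
such that `a_{i₁…i_m} ≠ 0` implies `j/ℓ + m·φ(i₁)/σ ≡ (φ(i₁)+⋯+φ(i_m))/σ (mod ℤ)`. -/
theorem stmt6 {m n ℓ σ j : ℕ} [NeZero m] [NeZero n] (hℓ : 0 < ℓ) (hσ : 0 < σ)
    (A : Tensor m n) (hA : A.Nonneg) (hirr : A.WeaklyIrreducible) (hsym : A.SpectralSym ℓ)
    (d : Fin n → ℂ) (hd : d ∈ A.DSet ℓ j) (hdne : d ≠ fun _ => 1)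
    (hdσ : ∀ i, d i ^ σ = 1) :
    ∃ φ : Fin n → ℕ, (∀ v, 1 ≤ φ v ∧ φ v ≤ σ) ∧ φ 0 = σ ∧ (∃ v w, φ v ≠ φ w) ∧
      ∀ α : Fin m → Fin n, A α ≠ 0 →
        ∃ z : ℤ, (j : ℚ) / (ℓ : ℚ) + ((m : ℚ) * (φ (α 0) : ℚ)) / (σ : ℚ)
          = (∑ k : Fin m, (φ (α k) : ℚ)) / (σ : ℚ) + (z : ℚ) :=
  stmt6_general hσ A d hd hdne hdσ
end

section
/- Let A be a symmetric weakly irreducible nonnegative tensor of order m and dimension n that is spectral ℓ-symmetric with ℓ ≥ 2. Then A is (m,ℓ)-colorable: there exists a map φ : [n] → {1,...,m} such that whenever a_{i1...im} ≠ 0, φ(i1) + ··· + φ(im) ≡ m/ℓ (mod m). -/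
/-!
Let `F(x) = ∑_α a_α x_{α₁} ⋯ x_{α_m}` and let `ρ` be its maximum on `{x ≥ 0, ∑ xᵢ^m = 1}`, so that
`F(z) ≤ ρ ∑ zᵢ^m` for all `z ≥ 0`. A nonzero `z ≥ 0` attaining equality is positive (otherwise an
arc of the digraph leaves the support of `z`, and filling the zero coordinates with a small `ε`
gains order `ε^(m-1)` in `F` while costing only order `ε^m`), and, by the Lagrange condition and
symmetry, it is an eigenvector for `ρ`.

Spectral symmetry gives an eigenvector `y` for `e^{2πi/ℓ} ρ`. The triangle inequality makes `|y|`
attain equality, so it is positive and every eigenvalue equation for `y` is an equality case of the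
triangle inequality. Hence the phases `uᵢ = yᵢ / |yᵢ|` satisfy
`u_{α₁} ⋯ u_{α_m} = e^{2πi/ℓ} u_{α_k}^m` whenever `a_α ≠ 0`, for every slot `k` by symmetry. Then
`u^m` is constant along arcs, hence constant, and writing `uᵢ / u₀ = e^{2πi φᵢ/m}` turns this
identity into `∑ φ(α_k) ≡ m/ℓ (mod m)`.
-/

open BigOperators

/-- An `m`-uniform hypergraph on vertex set `Fin n`. -/
structure UniformHypergraph (m n : ℕ) where
  edges : Finset (Finset (Fin n))
  uniform : ∀ e ∈ edges, e.card = m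

/-- The adjacency tensor of an `m`-uniform hypergraph. -/
noncomputable def UniformHypergraph.adjTensor {m n : ℕ} (G : UniformHypergraph m n) : Tensor m n :=
  fun α => if Finset.image α Finset.univ ∈ G.edges then (1 : ℝ) / (m - 1).factorial else 0

/-- A hypergraph is connected if every two vertices are joined by a walk. -/
def UniformHypergraph.Connected {m n : ℕ} (G : UniformHypergraph m n) : Prop :=
  ∀ i j : Fin n, Relation.ReflTransGen (fun u v => ∃ e ∈ G.edges, u ∈ e ∧ v ∈ e) i j

open Finset

theorem sameRay_of_norm_sum_eq_sum_norm {ι E : Type*} [NormedAddCommGroup E] [NormedSpace ℝ E]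
    [StrictConvexSpace ℝ E] {s : Finset ι} {f : ι → E}
    (h : ‖∑ i ∈ s, f i‖ = ∑ i ∈ s, ‖f i‖) {j : ι} (hj : j ∈ s) :
    SameRay ℝ (f j) (∑ i ∈ s, f i) := by
  classical
  rw [← add_sum_erase s f hj] at h ⊢
  rw [← add_sum_erase s _ hj] at h
  have hadd : ‖f j + ∑ i ∈ s.erase j, f i‖ = ‖f j‖ + ‖∑ i ∈ s.erase j, f i‖ :=
    le_antisymm (norm_add_le _ _) (h ▸ add_le_add_right (norm_sum_le _ _) _)
  exact SameRay.rfl.add_right (sameRay_iff_norm_add.2 hadd)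

theorem SameRay.eq_of_pos_smul {E : Type*} [NormedAddCommGroup E] [NormedSpace ℝ E] {a b : ℝ}
    {x y : E} (h : SameRay ℝ (a • x) (b • y)) (ha : 0 < a) (hb : 0 < b) (hxy : ‖x‖ = ‖y‖) :
    x = y := by
  have h' := (h.pos_smul_left (inv_pos.2 ha)).pos_smul_right (inv_pos.2 hb)
  rw [inv_smul_smul₀ ha.ne', inv_smul_smul₀ hb.ne'] at h'
  exact h'.eq_of_norm_eq hxy

theorem Relation.ReflTransGen.exists_rel_of_not {α : Type*} {r : α → α → Prop} {P : α → Prop}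
    {a b : α} (h : Relation.ReflTransGen r a b) (ha : P a) (hb : ¬ P b) :
    ∃ c d, P c ∧ ¬ P d ∧ r c d := by
  induction h with
  | refl => exact absurd ha hb
  | @tail c d _ hcd ih => exact (em (P c)).elim (fun hc => ⟨c, d, hc, hb, hcd⟩) ih

theorem Relation.ReflTransGen.eq_of_rel_imp_eq {α β : Type*} {r : α → α → Prop} (f : α → β)
    (hf : ∀ a b, r a b → f a = f b) {a b : α} (h : Relation.ReflTransGen r a b) : f a = f b := by
  simpa [Relation.reflTransGen_eq_self] using h.lift f hf

theorem isPrimitiveRoot_rot {k : ℕ} (hk : k ≠ 0) : IsPrimitiveRoot (rot k) k :=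
  Complex.isPrimitiveRoot_exp k hk

theorem rot_pow_div {m ℓ : ℕ} (hm : m ≠ 0) (hℓm : ℓ ∣ m) : rot m ^ (m / ℓ) = rot ℓ := by
  obtain ⟨c, rfl⟩ := hℓm
  have hℓ : ℓ ≠ 0 := left_ne_zero_of_mul hm
  have hc : c ≠ 0 := right_ne_zero_of_mul hm
  rw [rot, rot, ← Complex.exp_nat_mul, Nat.mul_div_cancel_left c (Nat.pos_of_ne_zero hℓ)]
  congr 1
  push_cast
  field_simp

theorem modEq_of_rot_pow_eq {m ℓ s : ℕ} (hm : m ≠ 0) (hℓ : ℓ ≠ 0) (h : rot m ^ s = rot ℓ) :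
    s ≡ m / ℓ [MOD m] := by
  have hζ := isPrimitiveRoot_rot hm
  have hℓm : ℓ ∣ m := by
    rw [← (isPrimitiveRoot_rot hℓ).pow_eq_one_iff_dvd, ← h, ← pow_mul, mul_comm, pow_mul,
      hζ.pow_eq_one, one_pow]
  rwa [← rot_pow_div hm hℓm, (hζ.isOfFinOrder hm).pow_eq_pow_iff_modEq, ← hζ.eq_orderOf] at h

theorem norm_mul_ofReal_mul_pow {ω : ℂ} (hω : ‖ω‖ = 1) {ρ : ℝ} (hρ : 0 ≤ ρ) (y : ℂ) (k : ℕ) :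
    ‖ω * ρ * y ^ k‖ = ρ * ‖y‖ ^ k := by
  rw [norm_mul, norm_mul, hω, one_mul, Complex.norm_real, Real.norm_of_nonneg hρ, norm_pow]

theorem isCompact_nonneg_sum_pow_eq_one {m n : ℕ} [NeZero m] :
    IsCompact (Set.Ici 0 ∩ {x : Fin n → ℝ | ∑ i, x i ^ m = 1}) := by
  refine (isCompact_Icc (a := 0) (b := 1)).of_isClosed_subset
    (isClosed_Ici.inter (isClosed_eq (by fun_prop) continuous_const))
    fun x ⟨hx0, hx1⟩ => ⟨hx0, fun i => ?_⟩
  rw [Pi.one_apply, ← pow_le_one_iff_of_nonneg (hx0 i) (NeZero.ne m), ← hx1]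
  exact single_le_sum (fun j _ => pow_nonneg (hx0 j) m) (mem_univ i)

noncomputable def fillZeros {ι : Type*} (x : ι → ℝ) (ε : ℝ) (j : ι) : ℝ :=
  if x j = 0 then ε else x j

theorem fillZeros_of_ne {ι : Type*} {x : ι → ℝ} {j : ι} (hj : x j ≠ 0) (ε : ℝ) :
    fillZeros x ε j = x j := if_neg hj

theorem le_fillZeros {ι : Type*} {x : ι → ℝ} {ε : ℝ} (hε : 0 ≤ ε) (j : ι) :
    x j ≤ fillZeros x ε j := by
  by_cases hj : x j = 0 <;> simp [fillZeros, hj, hε]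

theorem fillZeros_one_pos {ι : Type*} {x : ι → ℝ} (hx : ∀ i, 0 ≤ x i) (j : ι) :
    0 < fillZeros x 1 j := by
  by_cases hj : x j = 0
  · simp [fillZeros, hj]
  · simpa [fillZeros, hj] using (hx j).lt_of_ne' hj

theorem mul_fillZeros_one_le {ι : Type*} {x : ι → ℝ} (hx : ∀ i, 0 ≤ x i) {ε : ℝ} (hε : ε ≤ 1)
    (j : ι) : ε * fillZeros x 1 j ≤ fillZeros x ε j := by
  by_cases hj : x j = 0
  · simp [fillZeros, hj]
  · simpa [fillZeros, hj] using mul_le_of_le_one_left (hx j) hε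

theorem sum_fillZeros_pow {ι : Type*} [Fintype ι] (x : ι → ℝ) (ε : ℝ) {m : ℕ}
    (hm : m ≠ 0) :
    ∑ j, fillZeros x ε j ^ m = ∑ j, x j ^ m + #{j | x j = 0} * ε ^ m := by
  have h : ∀ j, fillZeros x ε j ^ m = x j ^ m + if x j = 0 then ε ^ m else 0 := fun j => by
    by_cases hj : x j = 0 <;> simp [fillZeros, hj, zero_pow hm]
  rw [sum_congr rfl fun j _ => h j, sum_add_distrib, ← sum_filter, sum_const, nsmul_eq_mul]

namespace Tensor

variable {m n : ℕ} {A : Tensor m n} {ρ : ℝ}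

def form (A : Tensor m n) (x : Fin n → ℝ) : ℝ := ∑ α, A α * ∏ k, x (α k)

def IsFormBound (A : Tensor m n) (ρ : ℝ) : Prop :=
  ∀ z : Fin n → ℝ, (∀ i, 0 ≤ z i) → A.form z ≤ ρ * ∑ i, z i ^ m

theorem continuous_form (A : Tensor m n) : Continuous A.form := by
  unfold form
  fun_prop

theorem form_smul (A : Tensor m n) (c : ℝ) (x : Fin n → ℝ) : A.form (c • x) = c ^ m * A.form x := by
  simp only [form, Pi.smul_apply, smul_eq_mul, prod_mul_distrib, prod_const, card_univ,
    Fintype.card_fin, mul_sum]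
  exact sum_congr rfl fun α _ => by ring

theorem form_zero (A : Tensor m n) [NeZero m] : A.form 0 = 0 := by
  simpa [zero_pow (NeZero.ne m)] using A.form_smul 0 0

theorem form_nonneg (hA : A.Nonneg) {x : Fin n → ℝ} (hx : ∀ i, 0 ≤ x i) : 0 ≤ A.form x :=
  sum_nonneg fun α _ => mul_nonneg (hA α) (prod_nonneg fun _ _ => hx _)

theorem Nonneg.mul_sub_le_form_sub (hA : A.Nonneg) {x z : Fin n → ℝ} (hx : ∀ i, 0 ≤ x i)
    (hxz : ∀ i, x i ≤ z i) (α : Fin m → Fin n) :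
    A α * (∏ k, z (α k) - ∏ k, x (α k)) ≤ A.form z - A.form x := by
  simp only [form, ← sum_sub_distrib, ← mul_sub]
  exact single_le_sum (f := fun β => A β * (∏ k, z (β k) - ∏ k, x (β k)))
    (fun β _ => mul_nonneg (hA β) (sub_nonneg.2 (prod_le_prod (fun k _ => hx _) fun k _ => hxz _)))
    (mem_univ α)

theorem isFormBound_of_isMaxOn [NeZero m] {x : Fin n → ℝ}
    (hmax : IsMaxOn A.form (Set.Ici 0 ∩ {x | ∑ i, x i ^ m = 1}) x) : A.IsFormBound (A.form x) := by
  intro z hz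
  obtain hs | hs := (sum_nonneg fun i _ => pow_nonneg (hz i) m : 0 ≤ ∑ i, z i ^ m).eq_or_lt
  · have hz0 : z = 0 := funext fun i =>
      pow_eq_zero_iff (NeZero.ne m) |>.1 <|
        (sum_eq_zero_iff_of_nonneg fun j _ => pow_nonneg (hz j) m).1 hs.symm i (mem_univ i)
    rw [← hs, hz0, form_zero, mul_zero]
  set s := ∑ i, z i ^ m
  set c := s ^ ((m : ℝ)⁻¹)
  have hc : 0 < c := Real.rpow_pos_of_pos hs _
  have hcm : c ^ m = s := Real.rpow_inv_natCast_pow hs.le (NeZero.ne m)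
  have hw : c⁻¹ • z ∈ Set.Ici 0 ∩ {x | ∑ i, x i ^ m = 1} := by
    refine ⟨fun i => mul_nonneg (inv_nonneg.2 hc.le) (hz i), ?_⟩
    simp only [Set.mem_ofPred_eq, Pi.smul_apply, smul_eq_mul, mul_pow, ← mul_sum, inv_pow, hcm]
    exact inv_mul_cancel₀ hs.ne'
  calc A.form z = c ^ m * A.form (c⁻¹ • z) := by
        rw [form_smul, ← mul_assoc, ← mul_pow, mul_inv_cancel₀ hc.ne', one_pow, one_mul]
    _ ≤ c ^ m * A.form x := mul_le_mul_of_nonneg_left (hmax hw) (by positivity)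
    _ = A.form x * s := by rw [hcm, mul_comm]

theorem exists_isFormBound (A : Tensor m n) [NeZero m] [NeZero n] :
    ∃ x : Fin n → ℝ, (∀ i, 0 ≤ x i) ∧ ∑ i, x i ^ m = 1 ∧ A.IsFormBound (A.form x) := by
  have hKne : (Set.Ici 0 ∩ {x : Fin n → ℝ | ∑ i, x i ^ m = 1}).Nonempty :=
    ⟨Pi.single 0 1, Pi.single_nonneg.2 zero_le_one, by simp [Pi.single_apply, NeZero.ne m]⟩
  obtain ⟨x, ⟨hx0, hx1⟩, hmax⟩ :=
    isCompact_nonneg_sum_pow_eq_one.exists_isMaxOn hKne A.continuous_form.continuousOn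
  exact ⟨x, hx0, hx1, isFormBound_of_isMaxOn hmax⟩

theorem IsFormBound.nonneg [NeZero m] [NeZero n] (hρ : A.IsFormBound ρ) (hA : A.Nonneg) :
    0 ≤ ρ := by
  set e : Fin n → ℝ := Pi.single 0 1
  have he : ∀ i, 0 ≤ e i := fun i => by
    by_cases hi : i = 0 <;> simp [e, hi]
  have h := hρ _ he
  simp only [e, Pi.single_apply, ite_pow, one_pow, zero_pow (NeZero.ne m), sum_ite_eq',
    mem_univ, if_true, mul_one] at h
  exact (form_nonneg hA he).trans h

/-- `(A x^{m-1})_i` for a real vector `x`, as in `Tensor.EigEq`. -/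
def contract (A : Tensor m n) [NeZero m] (x : Fin n → ℝ) (i : Fin n) : ℝ :=
  ∑ α, if α 0 = i then A α * ∏ k ∈ univ.erase 0, x (α k) else 0

theorem sum_mul_contract (A : Tensor m n) [NeZero m] (x : Fin n → ℝ) :
    ∑ i, x i * A.contract x i = A.form x := by
  simp only [contract, mul_sum, mul_ite, mul_zero]
  rw [sum_comm]
  refine sum_congr rfl fun α _ => ?_
  rw [sum_ite_eq, if_pos (mem_univ _), ← mul_prod_erase univ (fun k => x (α k)) (mem_univ 0)]
  ring

theorem contract_pos [NeZero m] (hA : A.Nonneg) {x : Fin n → ℝ} (hx : ∀ i, 0 < x i)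
    {γ : Fin m → Fin n} (hγ : A γ ≠ 0) : 0 < A.contract x (γ 0) := by
  have hterm : ∀ α, 0 ≤ if α 0 = γ 0 then A α * ∏ k ∈ univ.erase 0, x (α k) else 0 := fun α => by
    split_ifs
    exacts [mul_nonneg (hA α) (prod_nonneg fun k _ => (hx _).le), le_rfl]
  refine lt_of_lt_of_le ?_ (single_le_sum (fun α _ => hterm α) (mem_univ γ))
  rw [if_pos rfl]
  exact mul_pos ((hA γ).lt_of_ne' hγ) (prod_pos fun k _ => hx _)

theorem Symm.sum_ite_eq_contract [NeZero m] (hsymm : A.Symm) (x : Fin n → ℝ) (i : Fin n)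
    (k : Fin m) :
    ∑ α, (if α k = i then A α * ∏ j ∈ univ.erase k, x (α j) else 0) = A.contract x i := by
  refine Fintype.sum_equiv ((Equiv.swap 0 k).arrowCongr (Equiv.refl (Fin n))) _ _ fun α => ?_
  have hα : (Equiv.swap 0 k).arrowCongr (Equiv.refl (Fin n)) α = α ∘ Equiv.swap 0 k := by
    ext j; simp
  rw [hα, hsymm, Function.comp_apply, Equiv.swap_apply_left]
  congr 2
  exact prod_equiv (Equiv.swap 0 k) (fun j => by simp [Equiv.swap_apply_eq_iff]) fun j _ => by simp

theorem Symm.hasDerivAt_form [NeZero m] (hsymm : A.Symm) (x : Fin n → ℝ) (i : Fin n) :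
    HasDerivAt (fun t : ℝ => A.form (x + t • Pi.single i 1)) (m * A.contract x i) 0 := by
  set e : Fin n → ℝ := Pi.single i 1
  have hterm : ∀ α : Fin m → Fin n, HasDerivAt (fun t : ℝ => A α * ∏ k, (x (α k) + t * e (α k)))
      (A α * ∑ k, (∏ j ∈ univ.erase k, x (α j)) * e (α k)) 0 := by
    intro α
    refine HasDerivAt.const_mul _ ?_
    simpa using HasDerivAt.fun_finsetProd (u := univ) (x := (0 : ℝ))
      fun k _ => (hasDerivAt_mul_const (e (α k))).const_add (x (α k))
  have hform : (fun t : ℝ => A.form (x + t • e)) =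
      fun t => ∑ α, A α * ∏ k, (x (α k) + t * e (α k)) := by
    ext t
    simp [form]
  rw [hform]
  refine (HasDerivAt.fun_sum fun α _ => hterm α).congr_deriv ?_
  simp only [mul_sum, e, Pi.single_apply, mul_ite, mul_one, mul_zero]
  rw [sum_comm]
  simp only [hsymm.sum_ite_eq_contract, sum_const, card_univ, Fintype.card_fin, nsmul_eq_mul]

theorem isEig_of_contract_eq [NeZero m] {x : Fin n → ℝ} (hx : x ≠ 0)
    (h : ∀ i, A.contract x i = ρ * x i ^ (m - 1)) : A.IsEig ρ := by
  refine ⟨fun i => x i, fun h0 => hx (funext fun i => Complex.ofReal_eq_zero.1 (congrFun h0 i)),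
    fun i => ?_⟩
  have hi := congrArg (fun r : ℝ => (r : ℂ)) (h i)
  push_cast [contract, apply_ite] at hi
  exact hi

theorem IsFormBound.contract_eq [NeZero m] (hρ : A.IsFormBound ρ) (hsymm : A.Symm)
    {x : Fin n → ℝ} (hx : ∀ i, 0 < x i) (hxρ : A.form x = ρ * ∑ i, x i ^ m) (i : Fin n) :
    A.contract x i = ρ * x i ^ (m - 1) := by
  set e : Fin n → ℝ := Pi.single i 1
  set g : ℝ → ℝ := fun t => A.form (x + t • e) - ρ * ∑ j, (x + t • e) j ^ m
  have hmax : IsLocalMax g 0 := by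
    filter_upwards [Ioo_mem_nhds (neg_neg_of_pos (hx i)) (hx i)] with t ht
    have hnonneg : ∀ j, 0 ≤ (x + t • e) j := fun j => by
      by_cases hj : j = i
      · subst hj; simp [e]; linarith [ht.1]
      · simpa [e, hj] using (hx j).le
    simpa [g, hxρ] using hρ _ hnonneg
  have hpow : HasDerivAt (fun t : ℝ => ∑ j, (x + t • e) j ^ m) (m * x i ^ (m - 1)) 0 := by
    have h := HasDerivAt.fun_sum (u := univ) (x := (0 : ℝ)) fun j _ =>
      ((hasDerivAt_mul_const (e j)).const_add (x j)).fun_pow m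
    refine (h.congr_deriv ?_).congr_of_eventuallyEq (.of_forall fun t => by simp)
    simp [e, Pi.single_apply]
  have hg : HasDerivAt g (m * A.contract x i - ρ * (m * x i ^ (m - 1))) 0 :=
    (hsymm.hasDerivAt_form x i).sub (hpow.const_mul ρ)
  have h0 := hmax.hasDerivAt_eq_zero hg
  have hm : (m : ℝ) ≠ 0 := Nat.cast_ne_zero.2 (NeZero.ne m)
  exact mul_left_cancel₀ hm (by linear_combination h0)

theorem IsFormBound.le_mul_of_fillZeros [NeZero m] (hρ : A.IsFormBound ρ)
    (hA : A.Nonneg) {x : Fin n → ℝ} (hx : ∀ i, 0 ≤ x i) (hxρ : A.form x = ρ * ∑ i, x i ^ m)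
    {γ : Fin m → Fin n} (hγ : x (γ 0) ≠ 0) {k₀ : Fin m} (hk₀ : x (γ k₀) = 0) {ε : ℝ}
    (hε : 0 < ε) (hε1 : ε ≤ 1) :
    A γ * x (γ 0) * ∏ k ∈ univ.erase 0, fillZeros x 1 (γ k) ≤ ρ * #{j | x j = 0} * ε := by
  have hgain : (A γ * x (γ 0) * ∏ k ∈ univ.erase 0, fillZeros x 1 (γ k)) * ε ^ (m - 1) ≤
      A γ * (∏ k, fillZeros x ε (γ k) - ∏ k, x (γ k)) := by
    rw [prod_eq_zero (f := fun k => x (γ k)) (mem_univ k₀) hk₀, sub_zero,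
      ← mul_prod_erase univ (fun k => fillZeros x ε (γ k)) (mem_univ 0), fillZeros_of_ne hγ]
    have hprod : ∏ k ∈ univ.erase 0, ε * fillZeros x 1 (γ k) ≤
        ∏ k ∈ univ.erase 0, fillZeros x ε (γ k) :=
      prod_le_prod (fun k _ => mul_nonneg hε.le (fillZeros_one_pos hx _).le)
        fun k _ => mul_fillZeros_one_le hx hε1 _
    rw [prod_mul_distrib, prod_const, card_erase_of_mem (mem_univ _), card_univ,
      Fintype.card_fin] at hprod
    have := mul_le_mul_of_nonneg_left hprod (mul_nonneg (hA γ) (hx (γ 0)))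
    linarith
  have hup := hρ _ fun j => (hx j).trans (le_fillZeros hε.le j)
  rw [sum_fillZeros_pow x ε (NeZero.ne m)] at hup
  have hloss := hA.mul_sub_le_form_sub hx (le_fillZeros hε.le) γ
  have hεm : ρ * #{j | x j = 0} * ε ^ m = ρ * #{j | x j = 0} * ε * ε ^ (m - 1) := by
    rw [mul_assoc _ ε, ← pow_succ', Nat.sub_add_cancel (Nat.one_le_iff_ne_zero.2 (NeZero.ne m))]
  refine le_of_mul_le_mul_right ?_ (pow_pos hε (m - 1))
  linarith

theorem IsFormBound.pos_of_eq [NeZero m] (hρ : A.IsFormBound ρ) (hA : A.Nonneg)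
    (hirr : A.WeaklyIrreducible) {x : Fin n → ℝ} (hx : ∀ i, 0 ≤ x i) (hx0 : x ≠ 0)
    (hxρ : A.form x = ρ * ∑ i, x i ^ m) (i : Fin n) : 0 < x i := by
  by_contra! hi
  obtain ⟨p, hp⟩ := Function.ne_iff.1 hx0
  obtain ⟨-, -, hp, hq, γ, hγ, rfl, k₀, -, rfl⟩ := (hirr p i).exists_rel_of_not
    (P := fun j => x j ≠ 0) hp (not_not.2 (le_antisymm hi (hx i)))
  set c := A γ * x (γ 0) * ∏ k ∈ univ.erase 0, fillZeros x 1 (γ k)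
  have hc : 0 < c := mul_pos (mul_pos ((hA γ).lt_of_ne' hγ) ((hx _).lt_of_ne' hp))
    (prod_pos fun k _ => fillZeros_one_pos hx _)
  set N : ℝ := ↑(#{j | x j = 0})
  set ε := min 1 (c / (|ρ| * N + 1))
  have hε : 0 < ε := lt_min one_pos (div_pos hc (by positivity))
  have hεc : ε * (|ρ| * N + 1) ≤ c := (le_div_iff₀ (by positivity)).1 (min_le_right _ _)
  have hρε : ρ * N * ε ≤ |ρ| * N * ε := by gcongr; exact le_abs_self ρ
  linarith [hρ.le_mul_of_fillZeros hA hx hxρ hp (not_not.1 hq) hε (min_le_left _ _)]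

theorem sum_norm_ite_eq_contract [NeZero m] (hA : A.Nonneg) (y : Fin n → ℂ) (i : Fin n) :
    ∑ α, ‖if α 0 = i then (A α : ℂ) * ∏ k ∈ univ.erase 0, y (α k) else 0‖ =
      A.contract (fun j => ‖y j‖) i := by
  refine sum_congr rfl fun α _ => ?_
  split_ifs
  · rw [norm_mul, norm_prod, Complex.norm_real, Real.norm_of_nonneg (hA α)]
  · exact norm_zero

theorem IsFormBound.contract_norm_eq [NeZero m] [NeZero n] (hρ : A.IsFormBound ρ)
    (hsymm : A.Symm) (hA : A.Nonneg) (hirr : A.WeaklyIrreducible) {ω : ℂ} (hω : ‖ω‖ = 1)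
    {y : Fin n → ℂ} (hy0 : y ≠ 0) (hy : A.EigEq (ω * ρ) y) :
    (∀ i, 0 < ‖y i‖) ∧ ∀ i, A.contract (fun j => ‖y j‖) i = ρ * ‖y i‖ ^ (m - 1) := by
  set β : Fin n → ℝ := fun j => ‖y j‖
  have hle : ∀ i, ρ * β i ^ (m - 1) ≤ A.contract β i := fun i => by
    rw [← sum_norm_ite_eq_contract hA, ← norm_mul_ofReal_mul_pow hω (hρ.nonneg hA), ← hy i]
    exact norm_sum_le _ _
  have hβ : A.form β = ρ * ∑ i, β i ^ m := by
    refine le_antisymm (hρ β fun _ => norm_nonneg _) ?_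
    rw [← sum_mul_contract, mul_sum]
    refine sum_le_sum fun i _ => ?_
    calc ρ * β i ^ m = β i * (ρ * β i ^ (m - 1)) := by
          rw [← mul_assoc, mul_comm (β i), mul_assoc, ← pow_succ',
            Nat.sub_add_cancel (Nat.one_le_iff_ne_zero.2 (NeZero.ne m))]
      _ ≤ β i * A.contract β i := mul_le_mul_of_nonneg_left (hle i) (norm_nonneg _)
  have hβ0 : β ≠ 0 := fun h => hy0 (funext fun j => norm_eq_zero.1 (congrFun h j))
  have hβpos := hρ.pos_of_eq hA hirr (fun _ => norm_nonneg _) hβ0 hβ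
  exact ⟨hβpos, hρ.contract_eq hsymm hβpos hβ⟩

theorem prod_div_norm_eq [NeZero m] (hA : A.Nonneg) {ω : ℂ} (hω : ‖ω‖ = 1) {y : Fin n → ℂ}
    (hy : A.EigEq (ω * ρ) y) (hpos : ∀ i, 0 < ‖y i‖)
    (heq : ∀ i, A.contract (fun j => ‖y j‖) i = ρ * ‖y i‖ ^ (m - 1))
    {γ : Fin m → Fin n} (hγ : A γ ≠ 0) :
    ∏ k ∈ univ.erase 0, y (γ k) / ‖y (γ k)‖ = ω * (y (γ 0) / ‖y (γ 0)‖) ^ (m - 1) := by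
  set β : Fin n → ℝ := fun j => ‖y j‖
  set u : Fin n → ℂ := fun j => y j / β j
  have hu : ∀ j, ‖u j‖ = 1 := fun j => by
    rw [norm_div, Complex.norm_real, Real.norm_of_nonneg (norm_nonneg _), div_self (hpos j).ne']
  have hyu : ∀ j, y j = β j * u j := fun j => by
    rw [mul_div_cancel₀ _ (Complex.ofReal_ne_zero.2 (hpos j).ne')]
  have hρpos : 0 < ρ := by
    have h := contract_pos hA hpos hγ
    rw [heq] at h
    exact pos_of_mul_pos_left h (pow_nonneg (hpos _).le _)
  have hray := sameRay_of_norm_sum_eq_sum_norm (s := univ)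
    (f := fun α => if α 0 = γ 0 then (A α : ℂ) * ∏ k ∈ univ.erase 0, y (α k) else 0)
    (by rw [sum_norm_ite_eq_contract hA, hy, norm_mul_ofReal_mul_pow hω hρpos.le, heq]) (mem_univ γ)
  rw [hy] at hray
  simp only [↓reduceIte] at hray
  set a := A γ * ∏ k ∈ univ.erase 0, β (γ k)
  set b := ρ * β (γ 0) ^ (m - 1)
  have ha : 0 < a := mul_pos ((hA γ).lt_of_ne' hγ) (prod_pos fun k _ => hpos _)
  have hb : 0 < b := mul_pos hρpos (pow_pos (hpos _) _)
  have h1 : (A γ : ℂ) * ∏ k ∈ univ.erase 0, y (γ k) = a • ∏ k ∈ univ.erase 0, u (γ k) := by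
    simp only [hyu, prod_mul_distrib, Complex.real_smul, a, Complex.ofReal_mul,
      Complex.ofReal_prod]
    ring
  have h2 : ω * ρ * y (γ 0) ^ (m - 1) = b • (ω * u (γ 0) ^ (m - 1)) := by
    rw [hyu, mul_pow, Complex.real_smul]
    push_cast [b]
    ring
  rw [h1, h2] at hray
  exact hray.eq_of_pos_smul ha hb (by simp [norm_prod, hu, hω])

theorem Symm.prod_eq_mul_pow [NeZero m] (hsymm : A.Symm) {u : Fin n → ℂ} {ω : ℂ}
    (h : ∀ γ, A γ ≠ 0 → ∏ k ∈ univ.erase 0, u (γ k) = ω * u (γ 0) ^ (m - 1))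
    {γ : Fin m → Fin n} (hγ : A γ ≠ 0) (k : Fin m) : ∏ j, u (γ j) = ω * u (γ k) ^ m := by
  have hσ := h (γ ∘ Equiv.swap 0 k) (by rwa [hsymm])
  simp only [Function.comp_apply, Equiv.swap_apply_left] at hσ
  rw [← Equiv.prod_comp (Equiv.swap 0 k), ← mul_prod_erase univ _ (mem_univ 0), hσ,
    Equiv.swap_apply_left, ← Nat.sub_add_cancel (Nat.one_le_iff_ne_zero.2 (NeZero.ne m)),
    pow_succ, Nat.add_sub_cancel]
  ring

theorem WeaklyIrreducible.exists_coloring [NeZero m] [NeZero n] (hirr : A.WeaklyIrreducible)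
    {ℓ : ℕ} (hℓ : ℓ ≠ 0) {u : Fin n → ℂ} (hu : ∀ j, u j ≠ 0)
    (h : ∀ γ, A γ ≠ 0 → ∀ k, ∏ j, u (γ j) = rot ℓ * u (γ k) ^ m) :
    ∃ φ : Fin n → ℕ, (∀ v, 1 ≤ φ v ∧ φ v ≤ m) ∧
      ∀ α : Fin m → Fin n, A α ≠ 0 → (∑ k : Fin m, φ (α k)) ≡ m / ℓ [MOD m] := by
  have harc : ∀ a b, A.Arc a b → u a ^ m = u b ^ m := by
    rintro _ _ ⟨γ, hγ, rfl, k, -, rfl⟩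
    exact mul_left_cancel₀ (Complex.exp_ne_zero _) ((h γ hγ 0).symm.trans (h γ hγ k))
  have hconst : ∀ j, u j ^ m = u 0 ^ m := fun j =>
    ((hirr 0 j).eq_of_rel_imp_eq (fun j => u j ^ m) harc).symm
  set q : Fin n → ℂ := fun j => u j / u 0
  have hq : ∀ j, q j ^ m = 1 := fun j => by
    rw [div_pow, hconst, div_self (pow_ne_zero _ (hu 0))]
  have hζ := isPrimitiveRoot_rot (NeZero.ne m)
  choose e he using fun j => hζ.eq_pow_of_pow_eq_one (hq j)
  refine ⟨fun j => e j + 1, fun j => ⟨le_add_self, (he j).1⟩, fun γ hγ => ?_⟩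
  have hrot : rot m ^ ∑ k, e (γ k) = rot ℓ := by
    rw [← prod_pow_eq_pow_sum, prod_congr rfl fun k _ => (he (γ k)).2, prod_div_distrib,
      prod_const, card_univ, Fintype.card_fin, h γ hγ 0, hconst, mul_div_assoc,
      div_self (pow_ne_zero _ (hu 0)), mul_one]
  rw [sum_add_distrib, sum_const, card_univ, Fintype.card_fin, smul_eq_mul, mul_one]
  exact Nat.add_modEq_right.trans (modEq_of_rot_pow_eq (NeZero.ne m) hℓ hrot)

end Tensor

/-- a symmetric weakly irreducible nonnegative tensor of order `m` and
dimension `n` that is spectral `ℓ`-symmetric (`ℓ ≥ 2`) is `(m,ℓ)`-colorable. -/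
theorem stmt7 {m n ℓ : ℕ} [NeZero m] [NeZero n] (hℓ : 2 ≤ ℓ) (A : Tensor m n)
    (hsymm : A.Symm) (hA : A.Nonneg) (hirr : A.WeaklyIrreducible)
    (hsym : A.SpectralSym ℓ) :
    ∃ φ : Fin n → ℕ, (∀ v, 1 ≤ φ v ∧ φ v ≤ m) ∧
      ∀ α : Fin m → Fin n, A α ≠ 0 → (∑ k : Fin m, φ (α k)) ≡ m / ℓ [MOD m] := by
  obtain ⟨x, hx, hx1, hρ⟩ := A.exists_isFormBound
  have hx0 : x ≠ 0 := by
    rintro rfl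
    simp [zero_pow (NeZero.ne m)] at hx1
  have hxρ : A.form x = A.form x * ∑ i, x i ^ m := by rw [hx1, mul_one]
  have hxpos := hρ.pos_of_eq hA hirr hx hx0 hxρ
  have hρeig := Tensor.isEig_of_contract_eq hx0 (hρ.contract_eq hsymm hxpos hxρ)
  obtain ⟨y, hy0, hy⟩ := (hsym _).1 hρeig
  have hℓ0 : ℓ ≠ 0 := by omega
  have hrot : ‖rot ℓ‖ = 1 :=
    Complex.norm_eq_one_of_pow_eq_one (isPrimitiveRoot_rot hℓ0).pow_eq_one hℓ0
  obtain ⟨hpos, heq⟩ := hρ.contract_norm_eq hsymm hA hirr hrot hy0 hy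
  set u : Fin n → ℂ := fun j => y j / ‖y j‖
  have hu : ∀ j, u j ≠ 0 := fun j =>
    div_ne_zero (norm_pos_iff.1 (hpos j)) (Complex.ofReal_ne_zero.2 (hpos j).ne')
  exact hirr.exists_coloring hℓ0 hu fun γ hγ =>
    hsymm.prod_eq_mul_pow (u := u) (fun _ hγ' => Tensor.prod_div_norm_eq hA hrot hy hpos heq hγ') hγ
end

section
/- Let A be an m-th order n-dimensional tensor that is (m,ℓ)-colorable, i.e., there is a map φ : [n] → {1,...,m} with φ(i1)+···+φ(im) ≡ m/ℓ (mod m) whenever a_{i1...im} ≠ 0. Then A is spectral ℓ-symmetric: Spec(A) = e^{i2π/ℓ}·Spec(A). -/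
/-!
Put `ζ = e^{2πi/m}` and `D = diag(ζ^{φ(1)}, …, ζ^{φ(n)})`. Since `ζ^m = 1`, the colouring condition
says that for every nonzero entry `a_{i₁…i_m}` the product `∏_k ζ^{φ(i_k)} = ζ^{m/ℓ} = e^{2πi/ℓ}`,
i.e. `A = e^{-2πi/ℓ} D^{-(m-1)} A D`. Such a diagonal similarity sends an eigenpair `(λ, x)` to
the eigenpair `(e^{2πi/ℓ} λ, D x)`, and `D⁻¹` is a diagonal similarity for the opposite angle.
-/

open BigOperators

open Finset Complex

namespace Tensor

def IsColoring {m n : ℕ} (A : Tensor m n) (ℓ : ℕ) (φ : Fin n → ℕ) : Prop :=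
  ∀ α : Fin m → Fin n, A α ≠ 0 → (∑ k : Fin m, φ (α k)) ≡ m / ℓ [MOD m]

variable {m n : ℕ} [NeZero m] {A : Tensor m n} {θ : ℝ} {d : Fin n → ℂ}

theorem diagSim_iff (hd : ∀ i, d i ≠ 0) :
    A.DiagSim θ d ↔ ∀ α : Fin m → Fin n, A α ≠ 0 →
      ∏ k ∈ univ.erase 0, d (α k) = exp (θ * I) * d (α 0) ^ (m - 1) := by
  have hm : (m : ℤ) - 1 = ((m - 1 : ℕ) : ℤ) := by
    have := NeZero.pos m
    omega
  refine forall_congr' fun α => ?_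
  rw [hm, zpow_neg, zpow_natCast]
  by_cases hA : A α = 0
  · simp [hA]
  have hdα := pow_ne_zero (m - 1) (hd (α 0))
  have hexp : exp (-(θ : ℂ) * I) = (exp (θ * I))⁻¹ := by rw [← exp_neg, neg_mul]
  rw [hexp, imp_iff_right hA, ← mul_inv, mul_right_comm _ (A α : ℂ),
    right_eq_mul₀ (by exact_mod_cast hA), inv_mul_eq_one₀ (mul_ne_zero (exp_ne_zero _) hdα), eq_comm]

theorem DiagSim.inv (h : A.DiagSim θ d) (hd : ∀ i, d i ≠ 0) : A.DiagSim (-θ) d⁻¹ := by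
  rw [diagSim_iff (d := d⁻¹) fun i => inv_ne_zero (hd i)]
  intro α hA
  simp only [Pi.inv_apply, prod_inv_distrib, (diagSim_iff hd).1 h α hA, mul_inv, inv_pow,
    ofReal_neg, neg_mul, exp_neg]

theorem DiagSim.isEig_exp_mul (h : A.DiagSim θ d) (hd : ∀ i, d i ≠ 0) {lam : ℂ}
    (hlam : A.IsEig lam) : A.IsEig (exp (θ * I) * lam) := by
  obtain ⟨x, hx, hEig⟩ := hlam
  refine ⟨d * x, fun h0 => hx (funext fun i => ?_), fun i => ?_⟩
  · simpa [hd i] using congrFun h0 i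
  calc (∑ α : Fin m → Fin n,
          if α 0 = i then (A α : ℂ) * ∏ k ∈ univ.erase 0, (d * x) (α k) else 0)
      = exp (θ * I) * d i ^ (m - 1) * ∑ α : Fin m → Fin n,
          if α 0 = i then (A α : ℂ) * ∏ k ∈ univ.erase 0, x (α k) else 0 := by
        rw [mul_sum]
        refine sum_congr rfl fun α _ => ?_
        split_ifs with hi
        · by_cases hA : A α = 0
          · simp [hA]
          rw [Pi.mul_def, prod_mul_distrib, (diagSim_iff hd).1 h α hA, hi]
          ring
        · rw [mul_zero]
    _ = exp (θ * I) * lam * (d * x) i ^ (m - 1) := by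
        rw [hEig i, Pi.mul_apply, mul_pow]
        ring

theorem DiagSim.isEig_exp_mul_iff (h : A.DiagSim θ d) (hd : ∀ i, d i ≠ 0) {lam : ℂ} :
    A.IsEig (exp (θ * I) * lam) ↔ A.IsEig lam := by
  refine ⟨fun hlam => ?_, h.isEig_exp_mul hd⟩
  have := (h.inv hd).isEig_exp_mul (fun i => inv_ne_zero (hd i)) hlam
  rwa [← mul_assoc, ← exp_add, ofReal_neg, neg_mul, neg_add_cancel, exp_zero, one_mul] at this

theorem IsColoring.diagSim_pow {ℓ : ℕ} {φ : Fin n → ℕ} (hφ : A.IsColoring ℓ φ) {ζ : ℂ}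
    (hζ : ζ ^ m = 1) (hθ : exp (θ * I) = ζ ^ (m / ℓ)) : A.DiagSim θ fun i => ζ ^ φ i := by
  have hζ0 : ζ ≠ 0 := ne_zero_pow (NeZero.ne m) (hζ ▸ one_ne_zero)
  rw [diagSim_iff fun i => pow_ne_zero _ hζ0]
  intro α hA
  apply mul_right_cancel₀ (pow_ne_zero (φ (α 0)) hζ0)
  rw [prod_erase_mul _ _ (mem_univ 0), mul_assoc, ← pow_succ, Nat.sub_add_cancel NeZero.one_le,
    pow_right_comm, hζ, one_pow, mul_one, prod_pow_eq_pow_sum,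
    pow_eq_pow_of_modEq (hφ α hA) hζ, hθ]

end Tensor

theorem rot_eq_exp (ℓ : ℕ) : rot ℓ = exp ((2 * Real.pi / ℓ : ℝ) * I) := by
  rw [rot]
  congr 1
  push_cast
  ring

theorem exp_two_pi_I_div_pow_div {ℓ m : ℕ} (hdvd : ℓ ∣ m) (hm : m ≠ 0) :
    exp (2 * Real.pi * I / m) ^ (m / ℓ) = exp ((2 * Real.pi / ℓ : ℝ) * I) := by
  have hℓ : (ℓ : ℂ) ≠ 0 := Nat.cast_ne_zero.2 (ne_zero_of_dvd_ne_zero hm hdvd)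
  rw [← exp_nat_mul, Nat.cast_div hdvd hℓ]
  congr 1
  push_cast
  field_simp

theorem stmt8_general {m n ℓ : ℕ} [NeZero m] (hdvd : ℓ ∣ m)
    (A : Tensor m n) (φ : Fin n → ℕ)
    (hcol : ∀ α : Fin m → Fin n, A α ≠ 0 → (∑ k : Fin m, φ (α k)) ≡ m / ℓ [MOD m]) :
    A.SpectralSym ℓ := by
  have hφ : A.IsColoring ℓ φ := hcol
  intro lam
  have hsim := hφ.diagSim_pow (isPrimitiveRoot_exp m (NeZero.ne m)).pow_eq_one
    (exp_two_pi_I_div_pow_div hdvd (NeZero.ne m)).symm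
  rw [rot_eq_exp, hsim.isEig_exp_mul_iff fun i => pow_ne_zero _ (exp_ne_zero _)]

/-- an `(m,ℓ)`-colorable tensor is spectral `ℓ`-symmetric. -/
theorem stmt8 {m n ℓ : ℕ} [NeZero m] [NeZero n] (hℓ : 0 < ℓ) (hdvd : ℓ ∣ m)
    (A : Tensor m n) (φ : Fin n → ℕ) (hφ : ∀ v, 1 ≤ φ v ∧ φ v ≤ m)
    (hcol : ∀ α : Fin m → Fin n, A α ≠ 0 → (∑ k : Fin m, φ (α k)) ≡ m / ℓ [MOD m]) :
    A.SpectralSym ℓ :=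
  stmt8_general hdvd A φ hcol
end

section
/- Let G be a connected m-uniform hypergraph that is spectral ℓ-symmetric with ℓ ≥ 2. Then G is m-colorable: there is a map ψ : V(G) → {1,...,m} such that every edge of G contains two vertices receiving different colors. In particular the chromatic number χ(G) ≤ m. -/
open BigOperators

/-!
The adjacency tensor `A` of `G` is nonnegative, symmetric and, as `G` is connected, weakly
irreducible, so a Perron–Frobenius argument applies. A maximiser `x` of `A x^m` on the nonnegative
part of the unit sphere `∑ xᵢ^m = 1` is strictly positive, and by the Lagrange condition it is an
eigenvector for the maximum `ρ`. Spectral symmetry provides an eigenvector `y` for `e^{2πi/ℓ} ρ`;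
the triangle inequality shows that `|y|` is again a maximiser, hence a positive eigenvector for `ρ`,
and the resulting equality in the triangle inequality pins down the phases `u = y / |y|`: for every
edge `e ∋ v`, `∏_{w ∈ e} u_w = e^{2πi/ℓ} u_v^m`. So `u_v^m` is constant on the connected `G`, the
ratio `u_v / u_0` is an `m`-th root of unity, and its index is the colour of `v`. On a monochromatic
edge all `u_w` would agree and the product would be `u_v^m`, contradicting `e^{2πi/ℓ} ≠ 1`.
-/

theorem Complex.eq_one_of_norm_le_one_of_re_eq_one {z : ℂ} (hz : ‖z‖ ≤ 1) (hre : z.re = 1) :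
    z = 1 := by
  have h := Complex.re_eq_norm.1 (le_antisymm (Complex.re_le_norm z) (hz.trans hre.ge))
  exact Complex.ext hre (Complex.nonneg_iff.1 h).2.symm

theorem Complex.eq_of_sum_mul_eq_sum_mul {ι : Type*} {s : Finset ι} {c : ι → ℝ}
    (hc : ∀ i ∈ s, 0 ≤ c i) {ζ : ι → ℂ} (hζ : ∀ i ∈ s, ‖ζ i‖ ≤ 1) {ω : ℂ} (hω : ‖ω‖ = 1)
    (h : ∑ i ∈ s, (c i : ℂ) * ζ i = (∑ i ∈ s, c i : ℝ) * ω) {i : ι} (hi : i ∈ s) (hci : c i ≠ 0) :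
    ζ i = ω := by
  have hωω : ω * (starRingEnd ℂ) ω = 1 := by
    rw [Complex.mul_conj, Complex.normSq_eq_norm_sq, hω]; norm_num
  have hre : ∑ j ∈ s, c j * (1 - (ζ j * (starRingEnd ℂ) ω).re) = 0 := by
    have := congrArg (fun z => (z * (starRingEnd ℂ) ω).re) h
    simp only [Finset.sum_mul, mul_assoc, hωω, mul_one, Complex.re_sum, Complex.re_ofReal_mul,
      Complex.ofReal_re] at this
    simp only [mul_sub, mul_one, Finset.sum_sub_distrib, this, sub_self]
  have hle (j) (hj : j ∈ s) : (ζ j * (starRingEnd ℂ) ω).re ≤ 1 :=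
    (Complex.re_le_norm _).trans (by simpa [hω] using hζ j hj)
  have hi1 := (Finset.sum_eq_zero_iff_of_nonneg fun j hj =>
    mul_nonneg (hc j hj) (sub_nonneg.2 (hle j hj))).1 hre i hi
  have h1 : ζ i * (starRingEnd ℂ) ω = 1 := Complex.eq_one_of_norm_le_one_of_re_eq_one
    (by simpa [hω] using hζ i hi) (by linarith [(mul_eq_zero.1 hi1).resolve_left hci])
  calc ζ i = ζ i * (starRingEnd ℂ) ω * ω := by rw [mul_assoc, mul_comm _ ω, hωω, mul_one]
    _ = ω := by rw [h1, one_mul]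

theorem norm_rot (k : ℕ) : ‖rot k‖ = 1 := by
  simp [rot, Complex.norm_exp, Complex.div_re]

theorem rot_ne_one {ℓ : ℕ} (hℓ : 2 ≤ ℓ) : rot ℓ ≠ 1 :=
  (Complex.isPrimitiveRoot_exp ℓ (by omega)).ne_one (by omega)

namespace Tensor

open Finset

variable {m n : ℕ}

/-- The scalar `A x^m`. -/
noncomputable def evalPow (A : Tensor m n) (x : Fin n → ℝ) : ℝ :=
  ∑ α : Fin m → Fin n, A α * ∏ k, x (α k)

/-- The vector `A x^{m-1}`, real counterpart of the left-hand side of `Tensor.EigEq`. -/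
noncomputable def mulVecPow [NeZero m] (A : Tensor m n) (x : Fin n → ℝ) (i : Fin n) : ℝ :=
  ∑ α : Fin m → Fin n, if α 0 = i then A α * ∏ k ∈ univ.erase (0 : Fin m), x (α k) else 0

theorem evalPow_eq_sum_mul_mulVecPow [NeZero m] (A : Tensor m n) (x : Fin n → ℝ) :
    A.evalPow x = ∑ i, x i * A.mulVecPow x i := by
  simp only [mulVecPow, mul_sum, mul_ite, mul_zero]
  rw [sum_comm]
  refine sum_congr rfl fun α _ => ?_
  rw [sum_ite_eq, if_pos (mem_univ _), ← mul_prod_erase univ (fun k => x (α k)) (mem_univ 0)]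
  ring

theorem evalPow_smul (A : Tensor m n) (c : ℝ) (x : Fin n → ℝ) :
    A.evalPow (c • x) = c ^ m * A.evalPow x := by
  simp only [evalPow, mul_sum, Pi.smul_apply, smul_eq_mul, prod_mul_distrib, prod_const,
    card_univ, Fintype.card_fin]
  exact sum_congr rfl fun α _ => by ring

theorem evalPow_zero [NeZero m] (A : Tensor m n) : A.evalPow 0 = 0 := by
  simp [evalPow, zero_pow (NeZero.ne m)]

theorem continuous_evalPow (A : Tensor m n) : Continuous A.evalPow := by
  unfold evalPow
  fun_prop

theorem evalPow_nonneg {A : Tensor m n} (hA : A.Nonneg) {x : Fin n → ℝ} (hx : 0 ≤ x) :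
    0 ≤ A.evalPow x :=
  sum_nonneg fun α _ => mul_nonneg (hA α) (prod_nonneg fun _ _ => hx _)

theorem mul_sub_le_evalPow_sub {A : Tensor m n} (hA : A.Nonneg) {x w : Fin n → ℝ} (hx : 0 ≤ x)
    (hxw : x ≤ w) (α : Fin m → Fin n) :
    A α * (∏ k, w (α k) - ∏ k, x (α k)) ≤ A.evalPow w - A.evalPow x := by
  have hterm (β : Fin m → Fin n) : 0 ≤ A β * ∏ k, w (β k) - A β * ∏ k, x (β k) := by
    rw [← mul_sub]
    exact mul_nonneg (hA β) (sub_nonneg.2 (prod_le_prod (fun _ _ => hx _) fun _ _ => hxw _))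
  rw [mul_sub, evalPow, evalPow, ← sum_sub_distrib]
  exact single_le_sum (fun β _ => hterm β) (mem_univ α)

theorem sum_ite_prod_erase_eq_mulVecPow [NeZero m] {A : Tensor m n} (hS : A.Symm)
    (x : Fin n → ℝ) (i : Fin n) (k : Fin m) :
    ∑ α : Fin m → Fin n, (if α k = i then A α * ∏ j ∈ univ.erase k, x (α j) else 0) =
      A.mulVecPow x i := by
  let σ := Equiv.swap (0 : Fin m) k
  have hσ : Function.Involutive fun α : Fin m → Fin n => α ∘ σ := fun α => by
    ext j; simp [σ]
  refine Fintype.sum_bijective _ hσ.bijective _ _ fun α => ?_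
  have hprod : ∏ j ∈ univ.erase k, x (α j) = ∏ j ∈ univ.erase 0, x (α (σ j)) :=
    prod_nbij' σ σ (by simp [σ, Equiv.swap_apply_eq_iff]) (by simp [σ, Equiv.swap_apply_eq_iff])
      (by simp [σ]) (by simp [σ]) (by simp [σ])
  simp [hprod, hS σ α, σ]

theorem hasDerivAt_evalPow_update [NeZero m] {A : Tensor m n} (hS : A.Symm)
    (x : Fin n → ℝ) (i : Fin n) :
    HasDerivAt (fun t => A.evalPow (Function.update x i t)) (m * A.mulVecPow x i) (x i) := by
  have hcoord (j : Fin n) : HasDerivAt (fun t => Function.update x i t j)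
      ((Pi.single i 1 : Fin n → ℝ) j) (x i) :=
    hasDerivAt_pi.1 (hasDerivAt_update x i (x i)) j
  refine (HasDerivAt.fun_sum (u := univ) fun (α : Fin m → Fin n) _ =>
    (HasDerivAt.fun_finsetProd (u := univ) fun k _ => hcoord (α k)).const_mul (A α)).congr_deriv ?_
  simp only [Function.update_eq_self, smul_eq_mul, Pi.single_apply, mul_ite, mul_one, mul_zero,
    mul_sum]
  rw [sum_comm]
  simp [sum_ite_prod_erase_eq_mulVecPow hS]

def RayleighLE (A : Tensor m n) (ρ : ℝ) : Prop :=
  ∀ w : Fin n → ℝ, 0 ≤ w → A.evalPow w ≤ ρ * ∑ i, w i ^ m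

theorem exists_rayleighLE_eq [NeZero m] [NeZero n] (A : Tensor m n) :
    ∃ ρ, A.RayleighLE ρ ∧ ∃ x, 0 ≤ x ∧ x ≠ 0 ∧ A.evalPow x = ρ * ∑ i, x i ^ m := by
  let S := {x : Fin n → ℝ | 0 ≤ x ∧ ∑ i, x i ^ m = 1}
  have hS_sub : S ⊆ Set.Icc 0 1 := fun x hx => ⟨hx.1, fun i =>
    (pow_le_one_iff_of_nonneg (hx.1 i) (NeZero.ne m)).1
      (hx.2 ▸ single_le_sum (fun j _ => pow_nonneg (hx.1 j) m) (mem_univ i))⟩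
  have hS_closed : IsClosed S :=
    (isClosed_le continuous_const continuous_id).inter (isClosed_eq (by fun_prop) continuous_const)
  have hS : IsCompact S := isCompact_Icc.of_isClosed_subset hS_closed hS_sub
  have hS_ne : (Pi.single 0 1 : Fin n → ℝ) ∈ S :=
    ⟨Pi.single_nonneg.2 zero_le_one, by simp [Pi.single_apply, zero_pow (NeZero.ne m)]⟩
  obtain ⟨x, hx, hmax⟩ := hS.exists_isMaxOn ⟨_, hS_ne⟩ A.continuous_evalPow.continuousOn
  refine ⟨A.evalPow x, fun w hw => ?_, x, hx.1, ?_, by rw [hx.2, mul_one]⟩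
  · rcases (sum_nonneg fun i _ => pow_nonneg (hw i) m : 0 ≤ ∑ i, w i ^ m).eq_or_lt with hN | hN
    · have hw0 : w = 0 := funext fun i => pow_eq_zero_iff (NeZero.ne m) |>.1 <|
        (sum_eq_zero_iff_of_nonneg fun j _ => pow_nonneg (hw j) m).1 hN.symm i (mem_univ i)
      rw [← hN, mul_zero, hw0, evalPow_zero]
    · set c := (∑ i, w i ^ m)⁻¹ ^ ((m : ℝ)⁻¹)
      have hc : c ^ m = (∑ i, w i ^ m)⁻¹ :=
        Real.rpow_inv_natCast_pow (inv_nonneg.2 hN.le) (NeZero.ne m)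
      have hcw : c • w ∈ S := ⟨smul_nonneg (by positivity) hw, by
        simp [mul_pow, ← mul_sum, hc, hN.ne']⟩
      have h := isMaxOn_iff.1 hmax _ hcw
      rwa [evalPow_smul, hc, inv_mul_le_iff₀ hN, mul_comm] at h
  · rintro rfl
    simpa [zero_pow (NeZero.ne m)] using hx.2

section Perron

variable [NeZero m] {A : Tensor m n} {ρ : ℝ} {x : Fin n → ℝ}

open Filter Topology in
theorem pos_of_arc (hA : A.Nonneg) (hρ : A.RayleighLE ρ) (hx : 0 ≤ x)
    (hFx : A.evalPow x = ρ * ∑ i, x i ^ m) {a b : Fin n} (hab : A.Arc a b) (ha : 0 < x a) :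
    0 < x b := by
  obtain ⟨α, hα, rfl, k, -, rfl⟩ := hab
  by_contra hb
  replace hb : x (α k) = 0 := le_antisymm (not_lt.1 hb) (hx _)
  have hρ0 : 0 ≤ ρ := nonneg_of_mul_nonneg_left (hFx ▸ evalPow_nonneg hA hx)
    ((pow_pos ha m).trans_le (single_le_sum (fun j _ => pow_nonneg (hx j) m) (mem_univ _)))
  -- Raising the zero coordinates of `x` to `t` gains order `t ^ (m - 1)` in `A x^m`, through
  -- the entry `A α`, but costs only order `t ^ m` in `∑ xᵢ ^ m`.
  have key : ∀ t > 0, A α * x (α 0) ≤ ρ * n * t := by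
    intro t ht
    set w : Fin n → ℝ := fun j => max (x j) t
    have hxw : x ≤ w := fun j => le_max_left _ _
    have hgain : A α * x (α 0) * t ^ (m - 1) ≤ A.evalPow w - A.evalPow x := by
      refine le_trans ?_ (mul_sub_le_evalPow_sub hA hx hxw α)
      rw [prod_eq_zero (f := fun j => x (α j)) (mem_univ k) hb, sub_zero,
        ← mul_prod_erase univ _ (mem_univ 0), mul_assoc]
      have hprod : t ^ (m - 1) ≤ ∏ j ∈ univ.erase 0, w (α j) :=
        calc t ^ (m - 1) = ∏ _j ∈ univ.erase (0 : Fin m), t := by simp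
          _ ≤ ∏ j ∈ univ.erase 0, w (α j) :=
            prod_le_prod (fun _ _ => ht.le) fun _ _ => le_max_right _ _
      gcongr
      exacts [hA α, le_max_left _ _]
    have hcost : ∑ j, w j ^ m ≤ ∑ j, x j ^ m + n * t ^ m := by
      calc ∑ j, w j ^ m ≤ ∑ j, (x j ^ m + t ^ m) := sum_le_sum fun j _ => by
            rcases le_total (x j) t with h | h
            · rw [show w j = t from max_eq_right h]
              exact le_add_of_nonneg_left (pow_nonneg (hx j) m)
            · rw [show w j = x j from max_eq_left h]
              exact le_add_of_nonneg_right (pow_nonneg ht.le m)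
        _ = ∑ j, x j ^ m + n * t ^ m := by simp [sum_add_distrib]
    have hw := hρ w (hx.trans hxw)
    have hcost' := mul_le_mul_of_nonneg_left hcost hρ0
    rw [← mul_pow_sub_one (NeZero.ne m)] at hcost'
    have : A α * x (α 0) * t ^ (m - 1) ≤ ρ * n * t * t ^ (m - 1) := by linarith
    exact le_of_mul_le_mul_right this (pow_pos ht _)
  have hlim : Tendsto (fun t => ρ * n * t) (𝓝[>] 0) (𝓝 0) :=
    tendsto_nhdsWithin_of_tendsto_nhds (by simpa using (continuous_const_mul (ρ * n)).tendsto 0)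
  exact (mul_pos ((hA α).lt_of_ne' hα) ha).not_ge
    (ge_of_tendsto hlim (eventually_nhdsWithin_of_forall key))

theorem pos_of_rayleighLE (hA : A.Nonneg) (hirr : A.WeaklyIrreducible) (hρ : A.RayleighLE ρ)
    (hx : 0 ≤ x) (hx0 : x ≠ 0) (hFx : A.evalPow x = ρ * ∑ i, x i ^ m) (i : Fin n) : 0 < x i := by
  obtain ⟨j, hj⟩ := Function.ne_iff.1 hx0
  induction hirr j i with
  | refl => exact (hx j).lt_of_ne' hj
  | tail _ hbc ih => exact pos_of_arc hA hρ hx hFx hbc ih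

theorem mulVecPow_eq_of_rayleighLE (hS : A.Symm) (hρ : A.RayleighLE ρ) (hx : 0 ≤ x)
    (hFx : A.evalPow x = ρ * ∑ i, x i ^ m) {i : Fin n} (hxi : 0 < x i) :
    A.mulVecPow x i = ρ * x i ^ (m - 1) := by
  set g : ℝ → ℝ := fun t =>
    ρ * ∑ j, Function.update x i t j ^ m - A.evalPow (Function.update x i t)
  have hmin : IsLocalMin g (x i) := by
    filter_upwards [Ioi_mem_nhds hxi] with t ht
    have hw : 0 ≤ Function.update x i t := fun j => by
      rcases eq_or_ne j i with rfl | h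
      · simpa using ht.le
      · simpa [h] using hx j
    simp only [g, Function.update_eq_self, hFx, sub_self]
    exact sub_nonneg.2 (hρ _ hw)
  have hderiv : HasDerivAt g (ρ * (m * x i ^ (m - 1)) - m * A.mulVecPow x i) (x i) := by
    have hsum := HasDerivAt.fun_sum (u := univ) fun j _ =>
      (hasDerivAt_pi.1 (hasDerivAt_update x i (x i)) j).pow m
    refine ((hsum.const_mul ρ).sub (hasDerivAt_evalPow_update hS x i)).congr_deriv ?_
    simp [Pi.single_apply]
  have hm : (m : ℝ) ≠ 0 := Nat.cast_ne_zero.2 (NeZero.ne m)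
  apply mul_left_cancel₀ hm
  linear_combination -hmin.hasDerivAt_eq_zero hderiv

theorem eigEq_ofReal (h : ∀ i, A.mulVecPow x i = ρ * x i ^ (m - 1)) :
    A.EigEq ρ fun i => x i := fun i => by
  simpa [mulVecPow, apply_ite (fun r : ℝ => (r : ℂ))] using congrArg (fun r : ℝ => (r : ℂ)) (h i)

theorem norm_sum_ite_mul_prod_le_mulVecPow (hA : A.Nonneg) (y : Fin n → ℂ) (i : Fin n) :
    ‖∑ α : Fin m → Fin n,
        if α 0 = i then (A α : ℂ) * ∏ k ∈ univ.erase (0 : Fin m), y (α k) else 0‖ ≤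
      A.mulVecPow (fun j => ‖y j‖) i :=
  (norm_sum_le _ _).trans_eq <| sum_congr rfl fun α _ => by
    split_ifs <;> simp [norm_prod, abs_of_nonneg (hA α)]

theorem prod_phase_eq_of_eigEq (hA : A.Nonneg) {ω : ℂ} (hω : ‖ω‖ = 1)
    {y : Fin n → ℂ} (hy : A.EigEq (ω * ρ) y) (hy0 : ∀ i, y i ≠ 0)
    (hz : ∀ i, A.mulVecPow (fun j => ‖y j‖) i = ρ * ‖y i‖ ^ (m - 1))
    {α : Fin m → Fin n} (hα : A α ≠ 0) :
    ∏ k ∈ univ.erase 0, y (α k) / ‖y (α k)‖ = ω * (y (α 0) / ‖y (α 0)‖) ^ (m - 1) := by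
  set u : Fin n → ℂ := fun j => y j / ‖y j‖
  show ∏ k ∈ univ.erase 0, u (α k) = ω * u (α 0) ^ (m - 1)
  have hyu (j : Fin n) : y j = ‖y j‖ * u j := by
    simp [u, mul_div_cancel₀ _ (Complex.ofReal_ne_zero.2 (norm_ne_zero_iff.2 (hy0 j)))]
  have hu (j : Fin n) : ‖u j‖ = 1 := by simp [u, hy0 j]
  set c : (Fin m → Fin n) → ℝ := fun β =>
    if β 0 = α 0 then A β * ∏ k ∈ univ.erase 0, ‖y (β k)‖ else 0
  refine Complex.eq_of_sum_mul_eq_sum_mul (s := univ) (c := c)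
    (ζ := fun β => ∏ k ∈ univ.erase 0, u (β k)) (fun β _ => ?_) (fun β _ => by simp [norm_prod, hu])
    (by simp only [norm_mul, norm_pow, hω, hu, one_pow, mul_one]) ?_ (mem_univ α)
    (by simp [c, hα, prod_ne_zero_iff, hy0])
  · simp only [c]; split_ifs
    · exact mul_nonneg (hA β) (prod_nonneg fun _ _ => norm_nonneg _)
    · exact le_rfl
  · have hterm (β : Fin m → Fin n) : (c β : ℂ) * ∏ k ∈ univ.erase 0, u (β k) =
        if β 0 = α 0 then (A β : ℂ) * ∏ k ∈ univ.erase 0, y (β k) else 0 := by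
      simp only [c]; split_ifs
      · rw [prod_congr rfl fun k _ => hyu (β k), prod_mul_distrib]; push_cast; ring
      · simp
    simp only [hterm, hy (α 0)]
    rw [show (∑ β, c β) = A.mulVecPow (fun j => ‖y j‖) (α 0) from rfl, hz]
    conv_lhs => rw [hyu (α 0)]
    push_cast; ring

theorem exists_phase_of_spectralSym [NeZero n] (hA : A.Nonneg) (hS : A.Symm)
    (hirr : A.WeaklyIrreducible) {ℓ : ℕ} (hsym : A.SpectralSym ℓ) :
    ∃ u : Fin n → ℂ, (∀ i, ‖u i‖ = 1) ∧
      ∀ α, A α ≠ 0 → ∏ k ∈ univ.erase 0, u (α k) = rot ℓ * u (α 0) ^ (m - 1) := by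
  obtain ⟨ρ, hρ, x, hx, hx0, hFx⟩ := A.exists_rayleighLE_eq
  have hxpos := pos_of_rayleighLE hA hirr hρ hx hx0 hFx
  have hρ_eig : A.IsEig ρ := ⟨fun i => x i, fun h => (hxpos 0).ne' (by simpa using congrFun h 0),
    eigEq_ofReal fun i => mulVecPow_eq_of_rayleighLE hS hρ hx hFx (hxpos i)⟩
  obtain ⟨y, hy0, hy⟩ := (hsym ρ).1 hρ_eig
  set z : Fin n → ℝ := fun j => ‖y j‖
  have hz : 0 ≤ z := fun j => norm_nonneg _
  have hz_le (i : Fin n) : ρ * z i ^ (m - 1) ≤ A.mulVecPow z i :=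
    calc ρ * z i ^ (m - 1) ≤ ‖rot ℓ * ρ * y i ^ (m - 1)‖ := by
          simpa [norm_rot] using mul_le_mul_of_nonneg_right (le_abs_self ρ) (pow_nonneg (hz i) _)
      _ ≤ A.mulVecPow z i := hy i ▸ norm_sum_ite_mul_prod_le_mulVecPow hA y i
  have hFz : A.evalPow z = ρ * ∑ i, z i ^ m := by
    refine le_antisymm (hρ z hz) ?_
    rw [evalPow_eq_sum_mul_mulVecPow, mul_sum]
    refine sum_le_sum fun i _ => ?_
    rw [← mul_pow_sub_one (NeZero.ne m), mul_left_comm]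
    exact mul_le_mul_of_nonneg_left (hz_le i) (hz i)
  have hz0 : z ≠ 0 := fun h => hy0 (funext fun i => norm_eq_zero.1 (congrFun h i))
  have hzpos := pos_of_rayleighLE hA hirr hρ hz hz0 hFz
  refine ⟨fun j => y j / z j, fun j => by simp [z, (hzpos j).ne'], fun α hα => ?_⟩
  exact prod_phase_eq_of_eigEq hA (norm_rot ℓ) hy (fun i => norm_pos_iff.1 (hzpos i))
    (fun i => mulVecPow_eq_of_rayleighLE hS hρ hz hFz (hzpos i)) hα

end Perron

end Tensor

namespace UHypergraph

open Finset

variable {m n : ℕ} (G : UHypergraph m n)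

theorem adjTensor_nonneg : G.adjTensor.Nonneg := fun α => by
  unfold adjTensor
  split <;> positivity

theorem adjTensor_symm : G.adjTensor.Symm := fun σ α => by
  simp only [adjTensor, ← image_image, image_univ_equiv]

theorem adjTensor_ne_zero {α : Fin m → Fin n} (h : univ.image α ∈ G.edges) :
    G.adjTensor α ≠ 0 := by
  simp only [adjTensor, if_pos h]
  positivity

theorem exists_tuple_of_mem [NeZero m] {e : Finset (Fin n)} (he : e ∈ G.edges) {v : Fin n}
    (hv : v ∈ e) :
    ∃ α : Fin m → Fin n, Function.Injective α ∧ univ.image α = e ∧ α 0 = v := by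
  let g : Fin m ≃ e := (e.equivFinOfCardEq (G.uniform e he)).symm
  let σ := Equiv.swap 0 (g.symm ⟨v, hv⟩)
  refine ⟨Subtype.val ∘ g ∘ σ, Subtype.val_injective.comp (g.injective.comp σ.injective), ?_,
    by simp [σ]⟩
  ext w
  simp only [mem_image, mem_univ, true_and, Function.comp_apply]
  refine ⟨fun ⟨k, hk⟩ => hk ▸ (g (σ k)).2, fun hw => ⟨σ.symm (g.symm ⟨w, hw⟩), by simp⟩⟩

theorem reflTransGen_arc_of_mem [NeZero m] {e : Finset (Fin n)} (he : e ∈ G.edges) {a b : Fin n}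
    (ha : a ∈ e) (hb : b ∈ e) : Relation.ReflTransGen G.adjTensor.Arc a b := by
  rcases eq_or_ne a b with rfl | hab
  · exact .refl
  obtain ⟨α, -, hα, rfl⟩ := G.exists_tuple_of_mem he ha
  obtain ⟨k, -, rfl⟩ := mem_image.1 (hα ▸ hb)
  exact .single ⟨α, G.adjTensor_ne_zero (hα ▸ he), rfl, k, fun hk => hab (hk ▸ rfl), rfl⟩

theorem weaklyIrreducible_adjTensor [NeZero m] {G : UHypergraph m n} (hG : G.Connected) :
    G.adjTensor.WeaklyIrreducible := fun i j => by
  induction hG i j with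
  | refl => exact .refl
  | tail _ hbc ih =>
    obtain ⟨e, he, hb, hc⟩ := hbc
    exact ih.trans (G.reflTransGen_arc_of_mem he hb hc)

theorem Connected.apply_eq {G : UHypergraph m n} (hG : G.Connected) {β : Type*}
    {f : Fin n → β} (hf : ∀ e ∈ G.edges, ∀ a ∈ e, ∀ b ∈ e, f a = f b) (i j : Fin n) :
    f i = f j := by
  induction hG i j with
  | refl => rfl
  | tail _ hbc ih =>
    obtain ⟨e, he, hb, hc⟩ := hbc
    exact ih.trans (hf e he _ hb _ hc)

theorem prod_edge_eq [NeZero m] {u : Fin n → ℂ} {c : ℂ}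
    (hu : ∀ α, G.adjTensor α ≠ 0 → ∏ k ∈ univ.erase 0, u (α k) = c * u (α 0) ^ (m - 1))
    {e : Finset (Fin n)} (he : e ∈ G.edges) {v : Fin n} (hv : v ∈ e) :
    ∏ w ∈ e, u w = c * u v ^ m := by
  obtain ⟨α, hinj, hα, rfl⟩ := G.exists_tuple_of_mem he hv
  rw [← hα, prod_image hinj.injOn, ← mul_prod_erase univ _ (mem_univ 0),
    hu α (G.adjTensor_ne_zero (hα ▸ he)), ← mul_pow_sub_one (NeZero.ne m)]
  ring

end UHypergraph

theorem exists_coloring_of_pow_eq_one {V : Type*} {m : ℕ} [NeZero m] (c : V → ℂ)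
    (hc : ∀ v, c v ^ m = 1) :
    ∃ ψ : V → ℕ, (∀ v, 1 ≤ ψ v ∧ ψ v ≤ m) ∧ ∀ a b, ψ a = ψ b → c a = c b := by
  choose k hk hkc using fun v =>
    (Complex.isPrimitiveRoot_exp m (NeZero.ne m)).eq_pow_of_pow_eq_one (hc v)
  exact ⟨fun v => k v + 1, fun v => ⟨Nat.le_add_left 1 _, hk v⟩, fun a b h => by
    rw [← hkc a, ← hkc b, Nat.succ_injective h]⟩

/-- a connected `m`-uniform hypergraph which is spectral `ℓ`-symmetric with
`ℓ ≥ 2` is `m`-colorable (no edge monochromatic), hence `χ(G) ≤ m`. -/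
theorem stmt11 {m n ℓ : ℕ} [NeZero m] [NeZero n] (hℓ : 2 ≤ ℓ) (G : UHypergraph m n)
    (hconn : G.Connected) (hsym : (G.adjTensor).SpectralSym ℓ) :
    ∃ ψ : Fin n → ℕ, (∀ v, 1 ≤ ψ v ∧ ψ v ≤ m) ∧
      ∀ e ∈ G.edges, ∃ u ∈ e, ∃ w ∈ e, ψ u ≠ ψ w := by
  obtain ⟨u, hu1, hu⟩ := G.adjTensor.exists_phase_of_spectralSym G.adjTensor_nonneg
    G.adjTensor_symm (UHypergraph.weaklyIrreducible_adjTensor hconn) hsym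
  have hu0 (v : Fin n) : u v ≠ 0 := norm_ne_zero_iff.1 (by simp [hu1])
  have hedge : ∀ e ∈ G.edges, ∀ v ∈ e, ∏ w ∈ e, u w = rot ℓ * u v ^ m :=
    fun e he v hv => G.prod_edge_eq hu he hv
  have hconst (v : Fin n) : u v ^ m = u 0 ^ m := hconn.apply_eq (fun e he a ha b hb =>
    mul_left_cancel₀ (Complex.exp_ne_zero _) ((hedge e he a ha).symm.trans (hedge e he b hb))) v 0
  obtain ⟨ψ, hψ, hψu⟩ := exists_coloring_of_pow_eq_one (fun v => u v / u 0)
    fun v => by rw [div_pow, hconst, div_self (pow_ne_zero _ (hu0 0))]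
  refine ⟨ψ, hψ, fun e he => ?_⟩
  obtain ⟨v, hv⟩ := Finset.card_pos.1 ((G.uniform e he).symm ▸ Nat.pos_of_ne_zero (NeZero.ne m))
  by_contra! hmono
  have hedge_v := hedge e he v hv
  rw [Finset.prod_congr rfl fun w hw => (div_left_inj' (hu0 0)).1 (hψu w v (hmono w hw v hv)),
    Finset.prod_const, G.uniform e he] at hedge_v
  exact rot_ne_one hℓ <|
    mul_right_cancel₀ (pow_ne_zero m (hu0 v)) (hedge_v.symm.trans (one_mul _).symm)
end

section
/- Let A be a tensor of order m and dimension n with characteristic polynomial φ_A(λ) = Σ_{d=0}^{D} a_d λ^{D−d}, D = n(m−1)^{n−1}. Then A is spectral ℓ-symmetric if and only if a_d = 0 whenever ℓ ∤ d, i.e., φ_A(λ) = λ^t f(λ^ℓ) for some t ≥ 0 and polynomial f. -/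
/-! A monic complex polynomial is the product of `X - a` over its roots, so rotating the roots
by `ε = e^{2πi/ℓ}` fixes the multiset exactly when `χ` equals `χ.scaleRoots ε = ε^D χ(X/ε)`.
The coefficient of `X^{D-d}` in the latter is `ε^d a_d`, and `ε^d = 1` iff `ℓ ∣ d`. -/

open BigOperators

lemma isPrimitiveRoot_rot_s13 {ℓ : ℕ} (hℓ : ℓ ≠ 0) : IsPrimitiveRoot (rot ℓ) ℓ := by
  simpa [rot] using Complex.isPrimitiveRoot_exp ℓ hℓ

namespace Polynomial

section AlgClosed

variable {K : Type*} [Field K] [IsAlgClosed K]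

theorem roots_map_mul_eq_self_iff_scaleRoots_eq {p : K[X]} (hp : p.Monic) {s : K} (hs : s ≠ 0) :
    p.roots.map (s * ·) = p.roots ↔ p.scaleRoots s = p := by
  rw [← roots_scaleRoots p hs.isUnit]
  refine ⟨fun h => ?_, fun h => by rw [h]⟩
  rw [(IsAlgClosed.splits _).eq_prod_roots_of_monic ((monic_scaleRoots_iff s).mpr hp), h,
    ← (IsAlgClosed.splits p).eq_prod_roots_of_monic hp]

end AlgClosed

section Domain

variable {R : Type*} [CommRing R] [IsDomain R]

theorem scaleRoots_eq_self_iff {p : R[X]} {s : R} :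
    p.scaleRoots s = p ↔ ∀ i, p.coeff i ≠ 0 → s ^ (p.natDegree - i) = 1 := by
  simp only [Polynomial.ext_iff, coeff_scaleRoots]
  refine forall_congr' fun i => ⟨fun h hi => ?_, fun h => ?_⟩
  · exact mul_eq_left₀ hi |>.mp h
  · by_cases hi : p.coeff i = 0
    · rw [hi, zero_mul]
    · rw [h hi, mul_one]

theorem scaleRoots_eq_self_iff_of_isPrimitiveRoot {p : R[X]} {ζ : R} {ℓ : ℕ}
    (hζ : IsPrimitiveRoot ζ ℓ) :
    p.scaleRoots ζ = p ↔ ∀ d ≤ p.natDegree, ¬ ℓ ∣ d → p.coeff (p.natDegree - d) = 0 := by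
  simp only [scaleRoots_eq_self_iff, hζ.pow_eq_one_iff_dvd]
  refine ⟨fun h d hd hdvd => ?_, fun h i hi => ?_⟩
  · by_contra hc
    exact hdvd (Nat.sub_sub_self hd ▸ h _ hc)
  · by_contra hdvd
    rcases le_or_gt i p.natDegree with hle | hlt
    · exact hi (Nat.sub_sub_self hle ▸ h _ (Nat.sub_le _ _) hdvd)
    · exact hi (coeff_eq_zero_of_natDegree_lt hlt)

end Domain

end Polynomial

theorem stmt13_general {m n ℓ : ℕ} (hℓ : 0 < ℓ)
    (χ : Polynomial ℂ) (hmon : χ.Monic)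
    (hdeg : χ.natDegree = n * (m - 1) ^ (n - 1)) :
    (χ.roots.map (fun z => rot ℓ * z) = χ.roots) ↔
      ∀ d ≤ n * (m - 1) ^ (n - 1), ¬ (ℓ ∣ d) →
        χ.coeff (n * (m - 1) ^ (n - 1) - d) = 0 := by
  have hrot := isPrimitiveRoot_rot_s13 hℓ.ne'
  rw [Polynomial.roots_map_mul_eq_self_iff_scaleRoots_eq hmon (hrot.ne_zero hℓ.ne'),
    Polynomial.scaleRoots_eq_self_iff_of_isPrimitiveRoot hrot, hdeg]

/-- with `χ` the characteristic polynomial of the tensor `A` (monic of degree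
`D = n(m-1)^{n-1}`, whose roots are exactly the eigenvalues of `A`), `A` is spectral
`ℓ`-symmetric iff `a_d = 0` whenever `ℓ ∤ d` (writing `χ(λ) = Σ_d a_d λ^{D-d}`). -/
theorem stmt13 {m n ℓ : ℕ} [NeZero m] [NeZero n] (hℓ : 0 < ℓ) (A : Tensor m n)
    (χ : Polynomial ℂ) (hmon : χ.Monic)
    (hdeg : χ.natDegree = n * (m - 1) ^ (n - 1))
    (hroots : ∀ lam : ℂ, lam ∈ χ.roots ↔ A.IsEig lam) :
    (χ.roots.map (fun z => rot ℓ * z) = χ.roots) ↔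
      ∀ d ≤ n * (m - 1) ^ (n - 1), ¬ (ℓ ∣ d) →
        χ.coeff (n * (m - 1) ^ (n - 1) - d) = 0 :=
  stmt13_general hℓ χ hmon hdeg
end

section
/- Let G be an m-uniform hypergraph whose vertex set admits a bipartition V = V1 ∪ V2 such that every edge intersects V1 in exactly p vertices (G is p-hm bipartite). Then G is spectral m/gcd(p,m)-symmetric. -/
/-!
Pick an `m`-th root of unity `w` with `w ^ p = e^{2πi/ℓ}`, `ℓ = m / gcd(p, m)`; it exists
because `ζ_m ^ p` is a primitive `ℓ`-th root of unity. Scaling the coordinates in `V1` by `w`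
(the diagonal matrix `D`) turns an eigenpair `(λ, x)` of the adjacency tensor into the eigenpair
`(w ^ p λ, D x)`: each edge meets `V1` in exactly `p` vertices, so every monomial of a nonzero
entry picks up the factor `w ^ p`, while `w ^ m = 1`. Applying this to `w` and to `w⁻¹` gives both
inclusions.
-/

open BigOperators

open Finset

theorem Tensor.IsEig.mul_of_prod_eq {m n : ℕ} [NeZero m] {A : Tensor m n} {lam c : ℂ}
    {d : Fin n → ℂ} (hd : ∀ i, d i ^ m = 1) (hA : ∀ α, A α ≠ 0 → ∏ k, d (α k) = c)
    (h : A.IsEig lam) : A.IsEig (c * lam) := by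
  obtain ⟨x, hx, hEig⟩ := h
  have hd_inv : ∀ i, d i ^ (m - 1) * d i = 1 := fun i => by
    rw [← pow_succ, Nat.sub_add_cancel (NeZero.one_le), hd]
  have hd_ne : ∀ i, d i ≠ 0 := fun i => right_ne_zero_of_mul_eq_one (hd_inv i)
  refine ⟨fun i => d i * x i, fun h0 => hx (funext fun i => ?_), fun i => ?_⟩
  · simpa [hd_ne i] using congrFun h0 i
  have hterm : ∀ α : Fin m → Fin n,
      (if α 0 = i then (A α : ℂ) * ∏ k ∈ univ.erase 0, d (α k) * x (α k) else 0) =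
        c * d i ^ (m - 1) *
          (if α 0 = i then (A α : ℂ) * ∏ k ∈ univ.erase 0, x (α k) else 0) := by
    intro α
    split_ifs with hα
    · by_cases hAα : A α = 0
      · simp [hAα]
      have hprod : ∏ k ∈ univ.erase 0, d (α k) = c * d i ^ (m - 1) := by
        rw [← hA α hAα, ← mul_prod_erase univ (fun k => d (α k)) (mem_univ 0), hα]
        linear_combination (-∏ k ∈ univ.erase 0, d (α k)) * hd_inv i
      rw [prod_mul_distrib, hprod]
      ring
    · simp
  calc ∑ α : Fin m → Fin n,
        (if α 0 = i then (A α : ℂ) * ∏ k ∈ univ.erase 0, d (α k) * x (α k) else 0)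
      = c * d i ^ (m - 1) * (lam * x i ^ (m - 1)) := by
        rw [sum_congr rfl fun α _ => hterm α, ← mul_sum, hEig i]
    _ = c * lam * (d i * x i) ^ (m - 1) := by ring

theorem exists_pow_eq_one_and_pow_eq_rot (p : ℕ) {m : ℕ} (hm : m ≠ 0) :
    ∃ w : ℂ, w ^ m = 1 ∧ w ^ p = rot (m / p.gcd m) := by
  have hζ : IsPrimitiveRoot (rot m) m := Complex.isPrimitiveRoot_exp m hm
  have hζp : IsPrimitiveRoot (rot m ^ p) (m / p.gcd m) := by
    rw [IsPrimitiveRoot.iff_orderOf, (hζ.isOfFinOrder hm).orderOf_pow, ← hζ.eq_orderOf,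
      Nat.gcd_comm]
  have : NeZero (m / p.gcd m) := ⟨(Nat.div_pos (Nat.le_of_dvd (Nat.pos_of_ne_zero hm)
    (Nat.gcd_dvd_right p m)) (Nat.gcd_pos_of_pos_right p (Nat.pos_of_ne_zero hm))).ne'⟩
  obtain ⟨j, -, hj⟩ := hζp.eq_pow_of_pow_eq_one
    (Complex.isPrimitiveRoot_exp (m / p.gcd m) (NeZero.ne _)).pow_eq_one
  exact ⟨rot m ^ j, by rw [pow_right_comm, hζ.pow_eq_one, one_pow],
    by rw [pow_right_comm, hj, rot]⟩

namespace UHypergraph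

variable {m n p : ℕ} (G : UHypergraph m n)

theorem injective_of_image_mem_edges {α : Fin m → Fin n} (h : univ.image α ∈ G.edges) :
    Function.Injective α := by
  have hcard : (univ.image α).card = (univ : Finset (Fin m)).card := by
    rw [G.uniform _ h, card_univ, Fintype.card_fin]
  simpa [Set.injOn_univ] using card_image_iff.mp hcard

theorem prod_ite_mem_eq_pow (V1 : Finset (Fin n)) (hp : ∀ e ∈ G.edges, (e ∩ V1).card = p)
    (w : ℂ) {α : Fin m → Fin n} (hα : G.adjTensor α ≠ 0) :
    ∏ k, (if α k ∈ V1 then w else 1) = w ^ p := by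
  have he : univ.image α ∈ G.edges := by
    by_contra he
    simp [adjTensor, he] at hα
  rw [← prod_image (f := fun v => if v ∈ V1 then w else 1)
    (G.injective_of_image_mem_edges he).injOn, prod_ite_mem, prod_const, hp _ he]

theorem isEig_pow_mul [NeZero m] (V1 : Finset (Fin n)) (hp : ∀ e ∈ G.edges, (e ∩ V1).card = p)
    {w lam : ℂ} (hw : w ^ m = 1) (h : G.adjTensor.IsEig lam) :
    G.adjTensor.IsEig (w ^ p * lam) :=
  h.mul_of_prod_eq (d := fun i => if i ∈ V1 then w else 1) (fun i => by split_ifs <;> simp [hw])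
    fun _ => G.prod_ite_mem_eq_pow V1 hp w

end UHypergraph

theorem stmt19_general {m n p : ℕ} [NeZero m] (G : UHypergraph m n)
    (V1 : Finset (Fin n)) (hp : ∀ e ∈ G.edges, (e ∩ V1).card = p) :
    (G.adjTensor).SpectralSym (m / Nat.gcd p m) := by
  obtain ⟨w, hwm, hwp⟩ := exists_pow_eq_one_and_pow_eq_rot p (NeZero.ne m)
  have hrot : rot (m / p.gcd m) ≠ 0 := Complex.exp_ne_zero _
  intro lam
  constructor
  · intro h
    rw [← hwp]
    exact G.isEig_pow_mul V1 hp hwm h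
  · intro h
    have h' := G.isEig_pow_mul V1 hp (w := w⁻¹) (by rw [inv_pow, hwm, inv_one]) h
    rwa [inv_pow, hwp, inv_mul_cancel_left₀ hrot] at h'

/-- an `m`-uniform `p`-hm bipartite hypergraph (every edge meets `V₁` in
exactly `p` vertices) is spectral `m/gcd(p,m)`-symmetric. -/
theorem stmt19 {m n p : ℕ} [NeZero m] [NeZero n] (hm : 0 < m) (G : UHypergraph m n)
    (V1 : Finset (Fin n)) (hp : ∀ e ∈ G.edges, (e ∩ V1).card = p) :
    (G.adjTensor).SpectralSym (m / Nat.gcd p m) :=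
  stmt19_general G V1 hp
end
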